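/- arXiv:math/0302275 — 7 statements merged into one kernel-verified Lean document; each statement's English description precedes it below -/
import Mathlib

section
/- Let S be a hyponormal unilateral weighted shift on H with nonzero weight sequence (α_n)_{n≥1} and M = lim_{n→∞} |α_n|. Then the residual spectrum of S is exactly the open disk {λ ∈ ℂ : |λ| < M}; that is, λI − S is injective with non-dense range if and only if |λ| < M. -/
/-!
`λ - S` is always injective: the coefficients of an eigenvector `S x = λ x` satisfy
`λ x₀ = 0` and `λ xₙ₊₁ = αₙ xₙ`, which forces `x = 0`. Its range fails to be dense exactly when
`conj λ` is an eigenvalue of `S†`, and the coefficients `dₙ = ⟪eₙ, y⟫` of such an eigenvector obey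
`conj αₙ dₙ₊₁ = conj λ dₙ`. If `‖λ‖ < M` this recursion has a square-summable solution (ratio
test); if `‖λ‖ ≥ M ≥ ‖αₙ‖` every solution has nondecreasing `‖dₙ‖`, so none is in `ℓ²` but `0`.
-/

open Filter Topology
open scoped ComplexConjugate InnerProductSpace InnerProduct

section Recurrence

variable {𝕜 : Type*} [NormedField 𝕜] {β : ℕ → 𝕜} {μ : 𝕜} {d : ℕ → 𝕜}

theorem exists_mul_succ_eq (hβ : ∀ n, β n ≠ 0) :
    ∃ d : ℕ → 𝕜, d 0 = 1 ∧ ∀ n, β n * d (n + 1) = μ * d n :=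
  ⟨fun n => Nat.rec 1 (fun k dk => μ * dk / β k) n, rfl,
    fun n => mul_div_cancel₀ _ (hβ n)⟩

theorem monotone_norm_of_mul_succ_eq (hβ : ∀ n, β n ≠ 0) (hle : ∀ n, ‖β n‖ ≤ ‖μ‖)
    (hd : ∀ n, β n * d (n + 1) = μ * d n) : Monotone fun n => ‖d n‖ := by
  refine monotone_nat_of_le_succ fun n => le_of_mul_le_mul_left ?_ (norm_pos_iff.mpr (hβ n))
  calc ‖β n‖ * ‖d n‖ ≤ ‖μ‖ * ‖d n‖ := by gcongr; exact hle n
    _ = ‖β n‖ * ‖d (n + 1)‖ := by simpa only [norm_mul] using congrArg norm (hd n).symm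

theorem summable_norm_sq_of_mul_succ_eq {ρ : ℝ} (hρ : ‖μ‖ < ρ)
    (hβρ : ∀ᶠ n in atTop, ρ ≤ ‖β n‖) (hd : ∀ n, β n * d (n + 1) = μ * d n) :
    Summable fun n => ‖d n‖ ^ 2 := by
  have hρ0 : 0 < ρ := (norm_nonneg μ).trans_lt hρ
  have hr : (‖μ‖ / ρ) ^ 2 < 1 :=
    pow_lt_one₀ (by positivity) ((div_lt_one hρ0).mpr hρ) two_ne_zero
  refine summable_of_ratio_norm_eventually_le hr ?_
  filter_upwards [hβρ] with n hn
  have hstep : ‖d (n + 1)‖ ≤ ‖μ‖ / ρ * ‖d n‖ := by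
    rw [div_mul_eq_mul_div, le_div_iff₀ hρ0]
    calc ‖d (n + 1)‖ * ρ ≤ ‖β n‖ * ‖d (n + 1)‖ := by rw [mul_comm]; gcongr
      _ = ‖μ‖ * ‖d n‖ := by simpa only [norm_mul] using congrArg norm (hd n)
  simp only [norm_pow, norm_norm, ← mul_pow]
  gcongr

end Recurrence

theorem HilbertBasis.ext_inner {ι 𝕜 E : Type*} [RCLike 𝕜] [NormedAddCommGroup E]
    [InnerProductSpace 𝕜 E] (b : HilbertBasis ι 𝕜 E) {x y : E}
    (h : ∀ i, ⟪b i, x⟫_𝕜 = ⟪b i, y⟫_𝕜) : x = y :=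
  b.repr.injective <| lp.ext <| funext fun i => by simp only [b.repr_apply_apply, h]

namespace ContinuousLinearMap

variable {𝕜 E F : Type*} [RCLike 𝕜] [NormedAddCommGroup E] [InnerProductSpace 𝕜 E]
  [CompleteSpace E] [NormedAddCommGroup F] [InnerProductSpace 𝕜 F] [CompleteSpace F]

theorem denseRange_iff_ker_adjoint_eq_bot (T : E →L[𝕜] F) : DenseRange T ↔ T†.ker = ⊥ := by
  rw [← T.orthogonal_range, ← Submodule.topologicalClosure_eq_top_iff,
    ← Submodule.dense_iff_topologicalClosure_eq_top, DenseRange, LinearMap.coe_range, coe_coe]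

theorem not_denseRange_smul_one_sub_iff (T : E →L[𝕜] E) (c : 𝕜) :
    ¬ DenseRange (c • (1 : E →L[𝕜] E) - T) ↔ ∃ y ≠ 0, (T†) y = conj c • y := by
  rw [denseRange_iff_ker_adjoint_eq_bot, ← ne_eq, Submodule.ne_bot_iff]
  simp [← star_eq_adjoint, sub_eq_zero, and_comm, eq_comm (b := conj c • _)]

end ContinuousLinearMap

def IsWeightedShift {𝕜 H : Type*} [RCLike 𝕜] [NormedAddCommGroup H] [InnerProductSpace 𝕜 H]
    (e : HilbertBasis ℕ 𝕜 H) (α : ℕ → 𝕜) (S : H →L[𝕜] H) : Prop :=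
  ∀ n, S (e n) = α n • e (n + 1)

namespace IsWeightedShift

variable {𝕜 H : Type*} [RCLike 𝕜] [NormedAddCommGroup H] [InnerProductSpace 𝕜 H]
  [CompleteSpace H] {e : HilbertBasis ℕ 𝕜 H} {α : ℕ → 𝕜} {S : H →L[𝕜] H}

theorem inner_basis_adjoint_apply (hS : IsWeightedShift e α S) (n : ℕ) (y : H) :
    ⟪e n, (S†) y⟫_𝕜 = conj (α n) * ⟪e (n + 1), y⟫_𝕜 := by
  rw [ContinuousLinearMap.adjoint_inner_right, hS n, inner_smul_left]

theorem adjoint_apply_basis_zero (hS : IsWeightedShift e α S) : (S†) (e 0) = 0 :=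
  e.ext_inner fun m => by
    simp [hS.inner_basis_adjoint_apply, orthonormal_iff_ite.mp e.orthonormal]

theorem adjoint_apply_basis_succ (hS : IsWeightedShift e α S) (n : ℕ) :
    (S†) (e (n + 1)) = conj (α n) • e n :=
  e.ext_inner fun m => by
    simp only [hS.inner_basis_adjoint_apply, inner_smul_right,
      orthonormal_iff_ite.mp e.orthonormal, Nat.add_right_cancel_iff]
    split_ifs with hmn <;> simp [hmn]

theorem eq_zero_of_apply_eq_smul (hS : IsWeightedShift e α S) (hα : ∀ n, α n ≠ 0) {c : 𝕜}
    {x : H} (hx : S x = c • x) : x = 0 := by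
  have hzero : c * ⟪e 0, x⟫_𝕜 = 0 := by
    rw [← inner_smul_right, ← hx, ← ContinuousLinearMap.adjoint_inner_left,
      hS.adjoint_apply_basis_zero, inner_zero_left]
  have hsucc (n : ℕ) : c * ⟪e (n + 1), x⟫_𝕜 = α n * ⟪e n, x⟫_𝕜 := by
    rw [← inner_smul_right, ← hx, ← ContinuousLinearMap.adjoint_inner_left,
      hS.adjoint_apply_basis_succ, inner_smul_left, RCLike.conj_conj]
  refine e.ext_inner fun n => ?_
  rw [inner_zero_right]
  rcases eq_or_ne c 0 with rfl | hc
  · simpa [hα n] using (hsucc n).symm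
  · induction n with
    | zero => simpa [hc] using hzero
    | succ n ih => simpa [ih, hc] using hsucc n

theorem injective_smul_one_sub (hS : IsWeightedShift e α S) (hα : ∀ n, α n ≠ 0) (c : 𝕜) :
    Function.Injective (c • (1 : H →L[𝕜] H) - S) :=
  (injective_iff_map_eq_zero _).mpr fun x hx =>
    hS.eq_zero_of_apply_eq_smul hα (sub_eq_zero.mp (hx : c • x - S x = 0)).symm

theorem adjoint_apply_eq_smul_iff (hS : IsWeightedShift e α S) {c : 𝕜} {y : H} :
    (S†) y = c • y ↔ ∀ n, conj (α n) * ⟪e (n + 1), y⟫_𝕜 = c * ⟪e n, y⟫_𝕜 := by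
  refine ⟨fun h n => ?_, fun h => e.ext_inner fun n => ?_⟩
  · rw [← hS.inner_basis_adjoint_apply, h, inner_smul_right]
  · rw [hS.inner_basis_adjoint_apply, inner_smul_right, h]

theorem norm_lt_of_adjoint_apply_eq_smul (hS : IsWeightedShift e α S) (hα : ∀ n, α n ≠ 0)
    {M : ℝ} (hαM : ∀ n, ‖α n‖ ≤ M) {c : 𝕜} {y : H} (hy : y ≠ 0) (hcy : (S†) y = c • y) :
    ‖c‖ < M := by
  by_contra! hMc
  refine hy (e.ext_inner fun n => ?_)
  have hmono : Monotone fun n => ‖⟪e n, y⟫_𝕜‖ := by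
    refine monotone_norm_of_mul_succ_eq (β := fun n => conj (α n)) (by simpa using hα)
      (fun n => ?_) (hS.adjoint_apply_eq_smul_iff.mp hcy)
    simpa using (hαM n).trans hMc
  have hmono_sq : Monotone fun n => ‖⟪e n, y⟫_𝕜‖ ^ 2 :=
    fun _ _ h => pow_le_pow_left₀ (norm_nonneg _) (hmono h) 2
  have hle_zero :=
    hmono_sq.ge_of_tendsto (e.orthonormal.inner_products_summable y).tendsto_atTop_zero n
  simpa using hle_zero

theorem exists_adjoint_apply_eq_smul (hS : IsWeightedShift e α S) (hα : ∀ n, α n ≠ 0) {M : ℝ}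
    (hM : Tendsto (fun n => ‖α n‖) atTop (𝓝 M)) {c : 𝕜} (hc : ‖c‖ < M) :
    ∃ y ≠ 0, (S†) y = c • y := by
  obtain ⟨d, hd0, hd⟩ := exists_mul_succ_eq (β := fun n => conj (α n)) (μ := c)
    (by simpa using hα)
  have hsum : Summable fun n => ‖d n‖ ^ 2 := by
    refine summable_norm_sq_of_mul_succ_eq (left_lt_add_div_two.mpr hc) ?_ hd
    filter_upwards [hM.eventually_const_lt (add_div_two_lt_right.mpr hc)] with n hn
    simpa using hn.le
  set y := e.repr.symm ⟨d, memℓp_gen (by simpa using hsum)⟩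
  have hy (n : ℕ) : ⟪e n, y⟫_𝕜 = d n := by
    rw [← e.repr_apply_apply, LinearIsometryEquiv.apply_symm_apply]
  refine ⟨y, fun h => ?_, hS.adjoint_apply_eq_smul_iff.mpr fun n => by simp only [hy, hd]⟩
  simpa [h, hd0] using hy 0

end IsWeightedShift

/-- The residual spectrum of a hyponormal unilateral weighted shift with nonzero
weights is exactly the open disk of radius `M = lim ‖α n‖`: `λI - S` is injective
with non-dense range iff `‖λ‖ < M`. -/
theorem residualSpectrum_of_hyponormal_unilateral_weighted_shift
    {H : Type*} [NormedAddCommGroup H] [InnerProductSpace ℂ H] [CompleteSpace H]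
    (e : HilbertBasis ℕ ℂ H) (α : ℕ → ℂ) (S : H →L[ℂ] H)
    (hS : ∀ n : ℕ, S (e n) = α n • e (n + 1))
    (hmono : ∀ n : ℕ, ‖α n‖ ≤ ‖α (n + 1)‖)
    (hnz : ∀ n : ℕ, α n ≠ 0)
    (M : ℝ) (hM : Filter.Tendsto (fun n : ℕ => ‖α n‖) Filter.atTop (nhds M)) :
    {lam : ℂ | Function.Injective ⇑(lam • (1 : H →L[ℂ] H) - S) ∧
        ¬ DenseRange ⇑(lam • (1 : H →L[ℂ] H) - S)}
      = {lam : ℂ | ‖lam‖ < M} := by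
  have hαM : ∀ n, ‖α n‖ ≤ M := (monotone_nat_of_le_succ hmono).ge_of_tendsto hM
  ext lam
  simp only [Set.mem_ofPred_eq, IsWeightedShift.injective_smul_one_sub hS hnz, true_and,
    ContinuousLinearMap.not_denseRange_smul_one_sub_iff]
  constructor
  · rintro ⟨y, hy, hSy⟩
    simpa using IsWeightedShift.norm_lt_of_adjoint_apply_eq_smul hS hnz hαM hy hSy
  · intro hlam
    exact IsWeightedShift.exists_adjoint_apply_eq_smul hS hnz hM (by simpa using hlam)
end

section
/- Let S be a hyponormal unilateral weighted shift on H with nonzero weight sequence (α_n)_{n≥1} and M = lim_{n→∞} |α_n|. Then the spectrum of S (and of its adjoint S*) is exactly the closed disk {λ ∈ ℂ : |λ| ≤ M}. -/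
/-!
The weights increase to `M` and `S†` acts on coordinates by `(S† x) n = conj (α n) * x (n + 1)`,
so `‖S†‖ ≤ M` and `σ(S†)` lies in the closed disk of radius `M`. Conversely, for `‖μ‖ < M` the vector with coordinates
`c n = μ ^ n / ∏ k < n, conj (α k)` solves `S† c = μ c`, and it is square summable because
`‖c (n + 1)‖ / ‖c n‖ = ‖μ‖ / ‖α n‖ → ‖μ‖ / M < 1`. Hence the open disk consists of eigenvalues
of `S†`; the spectrum is closed, and `σ(S)` is the complex conjugate of `σ(S†)`.
-/

open Filter Topology Metric ComplexConjugate

section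

variable {𝕜 H : Type*} [RCLike 𝕜] [NormedAddCommGroup H] [InnerProductSpace 𝕜 H]

lemma HilbertBasis.hasSum_norm_sq_repr {ι : Type*} (e : HilbertBasis ι 𝕜 H) (x : H) :
    HasSum (fun i => ‖e.repr x i‖ ^ 2) (‖x‖ ^ 2) := by
  have h := lp.hasSum_norm (p := 2) (by norm_num) (e.repr x)
  simpa only [ENNReal.toReal_ofNat, Real.rpow_two, LinearIsometryEquiv.norm_map] using h

noncomputable def shiftEigencoeff (α : ℕ → 𝕜) (μ : 𝕜) (n : ℕ) : 𝕜 :=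
  μ ^ n / ∏ k ∈ Finset.range n, conj (α k)

lemma shiftEigencoeff_succ (α : ℕ → 𝕜) (μ : 𝕜) (n : ℕ) :
    shiftEigencoeff α μ (n + 1) = shiftEigencoeff α μ n * (μ / conj (α n)) := by
  rw [shiftEigencoeff, shiftEigencoeff, pow_succ, Finset.prod_range_succ, mul_div_mul_comm]

lemma conj_mul_shiftEigencoeff_succ {α : ℕ → 𝕜} (μ : 𝕜) {n : ℕ} (hα : α n ≠ 0) :
    conj (α n) * shiftEigencoeff α μ (n + 1) = μ * shiftEigencoeff α μ n := by
  rw [shiftEigencoeff_succ]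
  field_simp [(map_ne_zero _).2 hα]

lemma memℓp_shiftEigencoeff {α : ℕ → 𝕜} {μ : 𝕜} {M : ℝ}
    (hM : Tendsto (fun n => ‖α n‖) atTop (𝓝 M)) (hμ : ‖μ‖ < M) :
    Memℓp (shiftEigencoeff α μ) 2 := by
  have hM0 : 0 < M := (norm_nonneg μ).trans_lt hμ
  have hratio : Tendsto (fun n => (‖μ‖ / ‖α n‖) ^ 2) atTop (𝓝 ((‖μ‖ / M) ^ 2)) :=
    (tendsto_const_nhds.div hM hM0.ne').pow 2
  obtain ⟨r, hr, hr1⟩ : ∃ r, (‖μ‖ / M) ^ 2 < r ∧ r < 1 := by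
    refine exists_between ?_
    rw [sq_lt_one_iff₀ (by positivity)]
    exact (div_lt_one hM0).2 hμ
  refine memℓp_gen ?_
  simp only [ENNReal.toReal_ofNat, Real.rpow_two]
  refine summable_of_ratio_norm_eventually_le hr1 ?_
  filter_upwards [hratio.eventually (eventually_lt_nhds hr)] with n hn
  simp only [norm_pow, norm_norm, shiftEigencoeff_succ, norm_mul, norm_div, RCLike.norm_conj]
  rw [mul_pow, mul_comm]
  gcongr

variable [CompleteSpace H] (e : HilbertBasis ℕ 𝕜 H) {α : ℕ → 𝕜} {S : H →L[𝕜] H}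

lemma repr_adjoint_weightedShift (hS : ∀ n, S (e n) = α n • e (n + 1)) (x : H) (n : ℕ) :
    e.repr (S.adjoint x) n = conj (α n) * e.repr x (n + 1) := by
  rw [e.repr_apply_apply, ContinuousLinearMap.adjoint_inner_right, hS, inner_smul_left,
    ← e.repr_apply_apply]

lemma norm_adjoint_weightedShift_le (hS : ∀ n, S (e n) = α n • e (n + 1)) {C : ℝ}
    (hC : ∀ n, ‖α n‖ ≤ C) : ‖S.adjoint‖ ≤ C := by
  have hC0 : 0 ≤ C := (norm_nonneg _).trans (hC 0)
  refine S.adjoint.opNorm_le_bound hC0 fun x => ?_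
  have hx := e.hasSum_norm_sq_repr x
  have hx' : Summable fun n => ‖e.repr x (n + 1)‖ ^ 2 :=
    hx.summable.comp_injective Nat.succ_injective
  have hterm : ∀ n, ‖α n‖ ^ 2 * ‖e.repr x (n + 1)‖ ^ 2 ≤ C ^ 2 * ‖e.repr x (n + 1)‖ ^ 2 :=
    fun n => by gcongr; exact hC n
  refine le_of_sq_le_sq ?_ (by positivity)
  calc ‖S.adjoint x‖ ^ 2 = ∑' n, ‖α n‖ ^ 2 * ‖e.repr x (n + 1)‖ ^ 2 := by
        simp only [← (e.hasSum_norm_sq_repr _).tsum_eq, repr_adjoint_weightedShift e hS,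
          norm_mul, RCLike.norm_conj, mul_pow]
    _ ≤ ∑' n, C ^ 2 * ‖e.repr x (n + 1)‖ ^ 2 := by
        refine Summable.tsum_le_tsum hterm ?_ (hx'.mul_left _)
        exact (hx'.mul_left _).of_nonneg_of_le (fun n => by positivity) hterm
    _ = C ^ 2 * ∑' n, ‖e.repr x (n + 1)‖ ^ 2 := tsum_mul_left
    _ ≤ C ^ 2 * ‖x‖ ^ 2 := by
        gcongr
        rw [← hx.tsum_eq]
        exact tsum_comp_le_tsum_of_inj hx.summable (fun _ => by positivity) Nat.succ_injective
    _ = (C * ‖x‖) ^ 2 := (mul_pow _ _ _).symm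

lemma hasEigenvalue_adjoint_weightedShift (hS : ∀ n, S (e n) = α n • e (n + 1))
    (hα : ∀ n, α n ≠ 0) {M : ℝ} (hM : Tendsto (fun n => ‖α n‖) atTop (𝓝 M)) {μ : 𝕜}
    (hμ : ‖μ‖ < M) : Module.End.HasEigenvalue (S.adjoint : Module.End 𝕜 H) μ := by
  set x := e.repr.symm ⟨_, memℓp_shiftEigencoeff hM hμ⟩
  have hx : ∀ n, e.repr x n = shiftEigencoeff α μ n := fun n => by
    simp only [x, LinearIsometryEquiv.apply_symm_apply]
  refine Module.End.hasEigenvalue_of_hasEigenvector (x := x) ⟨?_, fun h0 => ?_⟩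
  · rw [Module.End.mem_eigenspace_iff]
    refine e.repr.injective (lp.ext (funext fun n => ?_))
    simp only [ContinuousLinearMap.coe_coe, repr_adjoint_weightedShift e hS, hx, map_smul,
      lp.coeFn_smul, Pi.smul_apply, smul_eq_mul, conj_mul_shiftEigencoeff_succ μ (hα n)]
  · simpa [shiftEigencoeff, h0] using hx 0

end

/-- The spectrum of a hyponormal unilateral weighted shift with nonzero weights
(and of its adjoint) is exactly the closed disk of radius `M = lim ‖α n‖`. -/
theorem spectrum_of_hyponormal_unilateral_weighted_shift
    {H : Type*} [NormedAddCommGroup H] [InnerProductSpace ℂ H] [CompleteSpace H]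
    (e : HilbertBasis ℕ ℂ H) (α : ℕ → ℂ) (S : H →L[ℂ] H)
    (hS : ∀ n : ℕ, S (e n) = α n • e (n + 1))
    (hmono : ∀ n : ℕ, ‖α n‖ ≤ ‖α (n + 1)‖)
    (hnz : ∀ n : ℕ, α n ≠ 0)
    (M : ℝ) (hM : Filter.Tendsto (fun n : ℕ => ‖α n‖) Filter.atTop (nhds M)) :
    spectrum ℂ S = {lam : ℂ | ‖lam‖ ≤ M} ∧
      spectrum ℂ (ContinuousLinearMap.adjoint S) = {lam : ℂ | ‖lam‖ ≤ M} := by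
  have : Nontrivial H := ⟨e 0, 0, e.orthonormal.ne_zero 0⟩
  have hle : ∀ n, ‖α n‖ ≤ M := (monotone_nat_of_le_succ hmono).ge_of_tendsto hM
  have hM0 : 0 < M := (norm_pos_iff.2 (hnz 0)).trans_le (hle 0)
  have hadj : spectrum ℂ S.adjoint = closedBall 0 M := by
    refine subset_antisymm (fun μ hμ => ?_) ?_
    · exact mem_closedBall_zero_iff.2
        ((spectrum.norm_le_norm_of_mem hμ).trans (norm_adjoint_weightedShift_le e hS hle))
    · rw [← closure_ball 0 hM0.ne']
      refine closure_minimal (fun μ hμ => ?_) (spectrum.isClosed _)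
      rw [ContinuousLinearMap.spectrum_eq]
      exact (hasEigenvalue_adjoint_weightedShift e hS hnz hM (mem_ball_zero_iff.1 hμ)).mem_spectrum
  have hS' : spectrum ℂ S = closedBall 0 M := by
    rw [← star_star S, spectrum.map_star, ContinuousLinearMap.star_eq_adjoint, hadj]
    ext μ
    simp
  have hball : closedBall (0 : ℂ) M = {lam : ℂ | ‖lam‖ ≤ M} := by
    ext μ
    simp
  exact ⟨hS'.trans hball, hadj.trans hball⟩
end

section
/- Let S be a hyponormal unilateral weighted shift on H with nonzero weight sequence (α_n)_{n≥1} and M = lim_{n→∞} |α_n|. Then the compression spectrum of S is exactly the open disk {λ ∈ ℂ : |λ| < M}; that is, the range of λI − S is not dense in H if and only if |λ| < M. -/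
/-! The range of `T = λ - S` is dense iff no nonzero vector is orthogonal to it. Testing against
the basis, `x ⊥ T eₙ` says `conj λ · xₙ = conj αₙ · xₙ₊₁` for the coordinates `xₙ` of `x`.
If `‖λ‖ ≥ M ≥ ‖αₙ‖`, this makes `‖xₙ‖` nondecreasing, and since `xₙ → 0` it forces `x = 0`.
If `‖λ‖ < M`, the solution `xₙ = ∏_{k<n} conj (λ / αₖ)` has ratios `‖λ‖ / ‖αₙ‖ → ‖λ‖ / M < 1`,
so it is square-summable and defines a nonzero vector orthogonal to the range. -/

open Filter Topology
open scoped InnerProductSpace ComplexConjugate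

section

variable {𝕜 E F : Type*} [RCLike 𝕜] [NormedAddCommGroup E] [InnerProductSpace 𝕜 E]
  [NormedAddCommGroup F] [InnerProductSpace 𝕜 F]

theorem ContinuousLinearMap.denseRange_iff_orthogonal_range_eq_bot [CompleteSpace F]
    (T : E →L[𝕜] F) : DenseRange T ↔ T.rangeᗮ = ⊥ := by
  rw [← Submodule.topologicalClosure_eq_top_iff, ← Submodule.dense_iff_topologicalClosure_eq_top,
    DenseRange, LinearMap.coe_range, ContinuousLinearMap.coe_coe]

theorem HilbertBasis.mem_orthogonal_range_iff {ι : Type*} (b : HilbertBasis ι 𝕜 E)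
    (T : E →L[𝕜] F) (x : F) : x ∈ T.rangeᗮ ↔ ∀ i, ⟪T (b i), x⟫_𝕜 = 0 := by
  refine ⟨fun hx i => hx _ (LinearMap.mem_range_self _ (b i)), fun h => ?_⟩
  have hT : (innerSL 𝕜 x).comp T = 0 := by
    refine ContinuousLinearMap.ext_on
      (Submodule.dense_iff_topologicalClosure_eq_top.mpr b.dense_span) ?_
    rintro _ ⟨i, rfl⟩
    simpa using inner_eq_zero_symm.mp (h i)
  rintro _ ⟨y, rfl⟩
  exact inner_eq_zero_symm.mp (by simpa using congr($hT y))

theorem HilbertBasis.tendsto_repr_cofinite_zero {ι : Type*} (b : HilbertBasis ι 𝕜 E) (x : E) :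
    Tendsto (b.repr x ·) cofinite (𝓝 0) := by
  rw [tendsto_zero_iff_norm_tendsto_zero]
  simpa [norm_smul, b.orthonormal.1] using (b.hasSum_repr x).summable.tendsto_cofinite_zero.norm

end

theorem monotone_norm_of_mul_eq_mul {K : Type*} [NormedField K] {μ : K} {a d : ℕ → K}
    (h : ∀ n, μ * d n = a n * d (n + 1)) (hμ : μ ≠ 0) (hle : ∀ n, ‖a n‖ ≤ ‖μ‖) :
    Monotone fun n => ‖d n‖ := by
  refine monotone_nat_of_le_succ fun n => le_of_mul_le_mul_left ?_ (norm_pos_iff.mpr hμ)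
  calc ‖μ‖ * ‖d n‖ = ‖a n‖ * ‖d (n + 1)‖ := by simpa only [norm_mul] using congr(‖$(h n)‖)
    _ ≤ ‖μ‖ * ‖d (n + 1)‖ := by gcongr; exact hle n

theorem summable_norm_prod_range_of_tendsto {K : Type*} [NormedField K] {z : ℕ → K} {r : ℝ}
    (hz : Tendsto (fun n => ‖z n‖) atTop (𝓝 r)) (hr : r < 1) :
    Summable fun n => ‖∏ k ∈ Finset.range n, z k‖ := by
  obtain ⟨q, hrq, hq⟩ := exists_between hr
  refine summable_of_ratio_norm_eventually_le hq ?_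
  filter_upwards [hz.eventually (gt_mem_nhds hrq)] with n hn
  simp only [Finset.prod_range_succ, norm_mul, norm_norm]
  rw [mul_comm]
  gcongr

theorem memℓp_two_of_summable_norm {ι E : Type*} [NormedAddCommGroup E] {f : ι → E}
    (hf : Summable fun i => ‖f i‖) : Memℓp f 2 :=
  (memℓp_gen (p := 1) (by simpa using hf)).of_exponent_ge one_le_two

section WeightedShift

variable {𝕜 H : Type*} [RCLike 𝕜] [NormedAddCommGroup H] [InnerProductSpace 𝕜 H]
  {e : HilbertBasis ℕ 𝕜 H} {α : ℕ → 𝕜} {S : H →L[𝕜] H}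

theorem mem_orthogonal_range_sub_weightedShift_iff (hS : ∀ n, S (e n) = α n • e (n + 1))
    (lam : 𝕜) (x : H) :
    x ∈ (lam • (1 : H →L[𝕜] H) - S).rangeᗮ ↔
      ∀ n, conj lam * e.repr x n = conj (α n) * e.repr x (n + 1) := by
  rw [e.mem_orthogonal_range_iff]
  refine forall_congr' fun n => ?_
  simp [hS, inner_sub_left, inner_smul_left, e.repr_apply_apply, sub_eq_zero]

theorem orthogonal_range_sub_weightedShift_eq_bot (hS : ∀ n, S (e n) = α n • e (n + 1))
    {lam : 𝕜} (hlam : lam ≠ 0) (hle : ∀ n, ‖α n‖ ≤ ‖lam‖) :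
    (lam • (1 : H →L[𝕜] H) - S).rangeᗮ = ⊥ := by
  refine (Submodule.eq_bot_iff _).mpr fun x hx => ?_
  have hmono := monotone_norm_of_mul_eq_mul
    ((mem_orthogonal_range_sub_weightedShift_iff hS lam x).mp hx)
    (by simpa using hlam) (by simpa using hle)
  have hzero := e.tendsto_repr_cofinite_zero x
  rw [Nat.cofinite_eq_atTop] at hzero
  have hrepr : e.repr x = 0 := by
    ext n
    simpa using hmono.ge_of_tendsto hzero.norm n
  simpa using hrepr

theorem orthogonal_range_sub_weightedShift_ne_bot (hS : ∀ n, S (e n) = α n • e (n + 1))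
    (hα : ∀ n, α n ≠ 0) {M : ℝ} (hM : Tendsto (fun n => ‖α n‖) atTop (𝓝 M))
    {lam : 𝕜} (hlt : ‖lam‖ < M) :
    (lam • (1 : H →L[𝕜] H) - S).rangeᗮ ≠ ⊥ := by
  set c : ℕ → 𝕜 := fun n => ∏ k ∈ Finset.range n, conj (lam / α k)
  have hc : Memℓp c 2 := by
    have hM0 : 0 < M := (norm_nonneg lam).trans_lt hlt
    have hratio : Tendsto (fun k => ‖conj (lam / α k)‖) atTop (𝓝 (‖lam‖ / M)) := by
      simp only [map_div₀, norm_div, RCLike.norm_conj]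
      exact tendsto_const_nhds.div hM hM0.ne'
    exact memℓp_two_of_summable_norm
      (summable_norm_prod_range_of_tendsto hratio ((div_lt_one hM0).mpr hlt))
  set x := e.repr.symm ⟨c, hc⟩
  have hx : ∀ n, e.repr x n = c n := fun n => by simp [x]
  have hxmem : x ∈ (lam • (1 : H →L[𝕜] H) - S).rangeᗮ := by
    refine (mem_orthogonal_range_sub_weightedShift_iff hS lam x).mpr fun n => ?_
    simp only [hx, c, Finset.prod_range_succ, map_div₀]
    field_simp [(map_ne_zero _).mpr (hα n)]
  intro hbot
  rw [hbot, Submodule.mem_bot] at hxmem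
  simpa [hxmem, c] using hx 0

end WeightedShift

/-- The compression spectrum of a hyponormal unilateral weighted shift with
nonzero weights is exactly the open disk of radius `M = lim ‖α n‖`: the range of
`λI - S` is not dense iff `‖λ‖ < M`. -/
theorem compressionSpectrum_of_hyponormal_unilateral_weighted_shift
    {H : Type*} [NormedAddCommGroup H] [InnerProductSpace ℂ H] [CompleteSpace H]
    (e : HilbertBasis ℕ ℂ H) (α : ℕ → ℂ) (S : H →L[ℂ] H)
    (hS : ∀ n : ℕ, S (e n) = α n • e (n + 1))
    (hmono : ∀ n : ℕ, ‖α n‖ ≤ ‖α (n + 1)‖)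
    (hnz : ∀ n : ℕ, α n ≠ 0)
    (M : ℝ) (hM : Filter.Tendsto (fun n : ℕ => ‖α n‖) Filter.atTop (nhds M)) :
    {lam : ℂ | ¬ DenseRange ⇑(lam • (1 : H →L[ℂ] H) - S)}
      = {lam : ℂ | ‖lam‖ < M} := by
  have hle : ∀ n, ‖α n‖ ≤ M := (monotone_nat_of_le_succ hmono).ge_of_tendsto hM
  ext lam
  simp only [Set.mem_ofPred_eq, ContinuousLinearMap.denseRange_iff_orthogonal_range_eq_bot]
  refine ⟨fun hne => not_le.mp fun hMlam => hne ?_,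
    orthogonal_range_sub_weightedShift_ne_bot hS hnz hM⟩
  have hlam : lam ≠ 0 :=
    norm_pos_iff.mp ((norm_pos_iff.mpr (hnz 0)).trans_le ((hle 0).trans hMlam))
  exact orthogonal_range_sub_weightedShift_eq_bot hS hlam fun n => (hle n).trans hMlam
end

section
/- Let T be a hyponormal bilateral weighted shift on H with nonzero weight sequence (β_n)_{n∈ℤ}, M = lim_{n→+∞} |β_n| and m = lim_{n→−∞} |β_n|. Then the point spectrum of the adjoint T* is exactly the open annulus {λ ∈ ℂ : m < |λ| < M}. -/
open Filter Finset
open scoped ENNReal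

noncomputable def zprod (g : ℤ → ℂ) : ℤ → ℂ := fun n =>
  if 0 ≤ n then ∏ i ∈ Finset.range n.toNat, g i
  else (∏ i ∈ Finset.range (-n).toNat, g (-(i+1) : ℤ))⁻¹

lemma zprod_zero (g : ℤ → ℂ) : zprod g 0 = 1 := by simp [zprod]

lemma zprod_ne_zero (g : ℤ → ℂ) (hg : ∀ k, g k ≠ 0) (n : ℤ) : zprod g n ≠ 0 := by
  unfold zprod
  split
  · exact Finset.prod_ne_zero_iff.2 fun i _ => hg _
  · exact inv_ne_zero (Finset.prod_ne_zero_iff.2 fun i _ => hg _)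

lemma zprod_succ (g : ℤ → ℂ) (hg : ∀ k, g k ≠ 0) (n : ℤ) :
    zprod g (n + 1) = zprod g n * g n := by
  rcases le_or_gt 0 n with hn | hn
  · rw [zprod, zprod, if_pos (by omega), if_pos hn]
    have h1 : (n + 1).toNat = n.toNat + 1 := by omega
    rw [h1, Finset.prod_range_succ, Int.toNat_of_nonneg hn]
  · rcases eq_or_lt_of_le (by omega : n + 1 ≤ 0) with h0 | h0
    · have hn1 : n = -1 := by omega
      subst hn1
      show zprod g 0 = _
      rw [zprod_zero, zprod, if_neg (by norm_num)]
      norm_num [inv_mul_cancel₀ (hg (-1))]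
    · rw [zprod, zprod, if_neg (by omega), if_neg (by omega)]
      have hk : (-n).toNat = (-(n+1)).toNat + 1 := by omega
      rw [hk, Finset.prod_range_succ]
      have h2 : (-(((-(n+1)).toNat : ℤ) + 1)) = n := by omega
      rw [h2, mul_inv, inv_mul_cancel_right₀ (hg n)]


/-- The point spectrum of the adjoint of a hyponormal bilateral weighted shift
with nonzero weights is exactly the open annulus `{λ : m < ‖λ‖ < M}`. -/
theorem pointSpectrum_adjoint_of_hyponormal_bilateral_weighted_shift
    {H : Type*} [NormedAddCommGroup H] [InnerProductSpace ℂ H] [CompleteSpace H]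
    (e : HilbertBasis ℤ ℂ H) (β : ℤ → ℂ) (T : H →L[ℂ] H)
    (hT : ∀ n : ℤ, T (e n) = β n • e (n + 1))
    (hmono : ∀ n : ℤ, ‖β n‖ ≤ ‖β (n + 1)‖)
    (hnz : ∀ n : ℤ, β n ≠ 0)
    (M : ℝ) (hM : Filter.Tendsto (fun n : ℤ => ‖β n‖) Filter.atTop (nhds M))
    (m : ℝ) (hm : Filter.Tendsto (fun n : ℤ => ‖β n‖) Filter.atBot (nhds m)) :
    {lam : ℂ | ∃ x : H, x ≠ 0 ∧ ContinuousLinearMap.adjoint T x = lam • x}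
      = {lam : ℂ | m < ‖lam‖ ∧ ‖lam‖ < M} := by
  classical
  have hmono' : Monotone fun n : ℤ => ‖β n‖ := monotone_int_of_le_succ hmono
  have hβM : ∀ n, ‖β n‖ ≤ M := hmono'.ge_of_tendsto hM
  have hmβ : ∀ n, m ≤ ‖β n‖ := hmono'.le_of_tendsto hm
  have hm0 : 0 ≤ m := ge_of_tendsto hm (Eventually.of_forall fun n => norm_nonneg _)
  have hβpos : ∀ n, 0 < ‖β n‖ := fun n => norm_pos_iff.2 (hnz n)
  -- coefficients of adjoint
  have hrepr_adj : ∀ (x : H) (n : ℤ),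
      e.repr (ContinuousLinearMap.adjoint T x) n
        = (starRingEnd ℂ) (β n) * e.repr x (n + 1) := by
    intro x n
    rw [e.repr_apply_apply, e.repr_apply_apply,
      ContinuousLinearMap.adjoint_inner_right, hT, inner_smul_left]
  have hrepr_smul : ∀ (x : H) (lam : ℂ) (n : ℤ),
      e.repr (lam • x) n = lam * e.repr x n := by
    intro x lam n
    rw [e.repr_apply_apply, e.repr_apply_apply, inner_smul_right]
  have hext : ∀ x y : H, (∀ n, e.repr x n = e.repr y n) → x = y := by
    intro x y h
    exact e.repr.injective (lp.ext (funext h))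
  ext lam
  simp only [Set.mem_setOf_eq]
  constructor
  · rintro ⟨x, hx0, hx⟩
    set c : ℤ → ℂ := fun n => e.repr x n with hcdef
    have hrec : ∀ n, (starRingEnd ℂ) (β n) * c (n + 1) = lam * c n := by
      intro n
      have := hrepr_adj x n
      rw [hx, hrepr_smul] at this
      exact this.symm
    have hnorm : ∀ n, ‖β n‖ * ‖c (n + 1)‖ = ‖lam‖ * ‖c n‖ := by
      intro n
      have := congrArg norm (hrec n)
      simpa [norm_mul, RCLike.norm_conj] using this
    obtain ⟨n0, hn0⟩ : ∃ n, c n ≠ 0 := by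
      by_contra h
      push_neg at h
      exact hx0 (hext x 0 (by intro n; simp [← hcdef, h n]))
    -- summability of coefficients
    have hsum : Summable fun n : ℤ => ‖c n‖ ^ (2 : ℝ) := by
      have h1 : Memℓp (e.repr x) 2 := lp.memℓp (e.repr x)
      have h2 : (0 : ℝ) < (2 : ℝ≥0∞).toReal := by norm_num
      simpa using (memℓp_gen_iff h2).1 h1
    have htend : Tendsto (fun n : ℤ => ‖c n‖ ^ (2 : ℝ)) cofinite (nhds 0) :=
      hsum.tendsto_cofinite_zero
    rw [Int.cofinite_eq] at htend
    have htendTop : Tendsto (fun n : ℤ => ‖c n‖ ^ (2 : ℝ)) atTop (nhds 0) :=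
      htend.mono_left le_sup_right
    have htendBot : Tendsto (fun n : ℤ => ‖c n‖ ^ (2 : ℝ)) atBot (nhds 0) :=
      htend.mono_left le_sup_left
    have hcpos : 0 < ‖c n0‖ ^ (2 : ℝ) := Real.rpow_pos_of_pos (norm_pos_iff.2 hn0) _
    constructor
    · -- m < ‖lam‖
      by_contra hle
      push_neg at hle
      have hanti : Antitone fun n : ℤ => ‖c n‖ := by
        apply antitone_int_of_succ_le
        intro n
        have h1 : ‖β n‖ * ‖c (n + 1)‖ ≤ ‖β n‖ * ‖c n‖ := by
          rw [hnorm n]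
          exact mul_le_mul_of_nonneg_right (hle.trans (hmβ n)) (norm_nonneg _)
        exact le_of_mul_le_mul_left h1 (hβpos n)
      have hev : ∀ᶠ n : ℤ in atBot, ‖c n‖ ^ (2 : ℝ) < ‖c n0‖ ^ (2 : ℝ) :=
        htendBot.eventually (gt_mem_nhds hcpos)
      obtain ⟨N, hN⟩ := eventually_atBot.1 hev
      have hle2 : ‖c n0‖ ≤ ‖c (min N n0)‖ := hanti (min_le_right _ _)
      have := hN (min N n0) (min_le_left _ _)
      have h3 : ‖c n0‖ ^ (2 : ℝ) ≤ ‖c (min N n0)‖ ^ (2 : ℝ) :=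
        Real.rpow_le_rpow (norm_nonneg _) hle2 (by norm_num)
      linarith
    · -- ‖lam‖ < M
      by_contra hle
      push_neg at hle
      have hmono_c : Monotone fun n : ℤ => ‖c n‖ := by
        apply monotone_int_of_le_succ
        intro n
        have h1 : ‖β n‖ * ‖c n‖ ≤ ‖β n‖ * ‖c (n + 1)‖ := by
          rw [hnorm n]
          exact mul_le_mul_of_nonneg_right ((hβM n).trans hle) (norm_nonneg _)
        exact le_of_mul_le_mul_left h1 (hβpos n)
      have hev : ∀ᶠ n : ℤ in atTop, ‖c n‖ ^ (2 : ℝ) < ‖c n0‖ ^ (2 : ℝ) :=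
        htendTop.eventually (gt_mem_nhds hcpos)
      obtain ⟨N, hN⟩ := eventually_atTop.1 hev
      have hle2 : ‖c n0‖ ≤ ‖c (max N n0)‖ := hmono_c (le_max_right _ _)
      have := hN (max N n0) (le_max_left _ _)
      have h3 : ‖c n0‖ ^ (2 : ℝ) ≤ ‖c (max N n0)‖ ^ (2 : ℝ) :=
        Real.rpow_le_rpow (norm_nonneg _) hle2 (by norm_num)
      linarith
  · rintro ⟨hml, hlM⟩
    have hlampos : 0 < ‖lam‖ := lt_of_le_of_lt hm0 hml
    have hlam0 : lam ≠ 0 := norm_pos_iff.1 hlampos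
    have hMpos : 0 < M := lt_trans hlampos hlM
    set g : ℤ → ℂ := fun k => (starRingEnd ℂ) (β k) with hgdef
    have hgne : ∀ k, g k ≠ 0 := fun k => by
      simp [hgdef, hnz k]
    set B := zprod g with hBdef
    have hBne : ∀ n, B n ≠ 0 := zprod_ne_zero g hgne
    set c : ℤ → ℂ := fun n => lam ^ n / B n with hcdef
    have hcne : ∀ n, c n ≠ 0 := fun n => div_ne_zero (zpow_ne_zero n hlam0) (hBne n)
    have hrec : ∀ n, (starRingEnd ℂ) (β n) * c (n + 1) = lam * c n := by
      intro n
      show g n * c (n + 1) = lam * c n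
      rw [hcdef]
      simp only
      rw [hBdef, zprod_succ g hgne n, zpow_add_one₀ hlam0]
      rw [mul_div_assoc', mul_div_assoc', div_eq_div_iff (mul_ne_zero (zprod_ne_zero g hgne n) (hgne n)) (zprod_ne_zero g hgne n)]
      ring
    have hnorm : ∀ n, ‖β n‖ * ‖c (n + 1)‖ = ‖lam‖ * ‖c n‖ := by
      intro n
      have := congrArg norm (hrec n)
      simpa [norm_mul, RCLike.norm_conj] using this
    have hratio_pos : ∀ n, ‖c (n + 1)‖ = ‖lam‖ / ‖β n‖ * ‖c n‖ := by
      intro n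
      rw [div_mul_eq_mul_div, eq_div_iff (hβpos n).ne']
      linear_combination hnorm n
    -- summability
    have hsum : Summable fun n : ℤ => ‖c n‖ ^ 2 := by
      rw [summable_int_iff_summable_nat_and_neg]
      constructor
      · apply summable_of_ratio_test_tendsto_lt_one
          (l := (‖lam‖ / M) ^ 2)
        · have : ‖lam‖ / M < 1 := (div_lt_one hMpos).2 hlM
          exact pow_lt_one₀ (by positivity) this (by norm_num)
        · exact Eventually.of_forall fun n => pow_ne_zero 2 (norm_ne_zero_iff.2 (hcne _))
        · have h1 : Tendsto (fun n : ℕ => ‖β (n : ℤ)‖) atTop (nhds M) :=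
            hM.comp tendsto_natCast_atTop_atTop
          have h2 : Tendsto (fun n : ℕ => (‖lam‖ / ‖β (n : ℤ)‖) ^ 2) atTop
              (nhds ((‖lam‖ / M) ^ 2)) :=
            ((tendsto_const_nhds.div h1 hMpos.ne').pow 2)
          apply h2.congr
          intro n
          have h3 : ‖c ((n : ℤ) + 1)‖ = ‖lam‖ / ‖β (n : ℤ)‖ * ‖c (n : ℤ)‖ :=
            hratio_pos n
          have hc1 : ((n + 1 : ℕ) : ℤ) = (n : ℤ) + 1 := by push_cast; ring
          rw [Real.norm_of_nonneg (by positivity), Real.norm_of_nonneg (by positivity),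
            hc1, h3]
          rw [mul_pow, mul_div_assoc]
          rw [div_self (pow_ne_zero 2 (norm_ne_zero_iff.2 (hcne _)) : ‖c (n:ℤ)‖ ^ 2 ≠ 0), mul_one]
      · apply summable_of_ratio_test_tendsto_lt_one
          (l := (m / ‖lam‖) ^ 2)
        · have : m / ‖lam‖ < 1 := (div_lt_one hlampos).2 hml
          exact pow_lt_one₀ (by positivity) this (by norm_num)
        · exact Eventually.of_forall fun n => pow_ne_zero 2 (norm_ne_zero_iff.2 (hcne _))
        · have hneg : Tendsto (fun n : ℕ => (-(n + 1) : ℤ)) atTop atBot := by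
            apply tendsto_neg_atTop_atBot.comp
            exact tendsto_atTop_add_const_right _ 1 tendsto_natCast_atTop_atTop
          have h1 : Tendsto (fun n : ℕ => ‖β (-(n + 1) : ℤ)‖) atTop (nhds m) :=
            hm.comp hneg
          have h2 : Tendsto (fun n : ℕ => (‖β (-(n + 1) : ℤ)‖ / ‖lam‖) ^ 2) atTop
              (nhds ((m / ‖lam‖) ^ 2)) :=
            ((h1.div tendsto_const_nhds hlampos.ne').pow 2)
          apply h2.congr
          intro n
          have h3 : ‖c (-(n + 1) : ℤ)‖ = ‖β (-(n+1) : ℤ)‖ / ‖lam‖ * ‖c (-(n:ℤ))‖ := by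
            have h4 := hnorm (-(n + 1) : ℤ)
            have h5 : (-(n + 1) : ℤ) + 1 = -(n : ℤ) := by ring
            rw [h5] at h4
            rw [div_mul_eq_mul_div, eq_div_iff hlampos.ne']
            linear_combination -h4
          have hc1 : (-((n:ℤ) + 1)) = (-(n + 1 : ℕ) : ℤ) := by push_cast; ring
          rw [Real.norm_of_nonneg (by positivity), Real.norm_of_nonneg (by positivity)]
          rw [show (-(n + 1 : ℕ) : ℤ) = (-(n+1) : ℤ) by push_cast; ring, h3]
          rw [mul_pow, mul_div_assoc]
          rw [div_self (pow_ne_zero 2 (norm_ne_zero_iff.2 (hcne _)) : ‖c (-(n:ℤ))‖ ^ 2 ≠ 0), mul_one]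
    have hmem : Memℓp c 2 := by
      apply memℓp_gen
      have h2 : ((2 : ℝ≥0∞).toReal) = ((2 : ℕ) : ℝ) := by norm_num
      rw [h2]
      simp only [Real.rpow_natCast]
      exact hsum
    set y : lp (fun _ : ℤ => ℂ) 2 := ⟨c, hmem⟩ with hydef
    set x : H := e.repr.symm y with hxdef
    have hreprx : ∀ n, e.repr x n = c n := by
      intro n
      rw [hxdef, LinearIsometryEquiv.apply_symm_apply]
    refine ⟨x, ?_, ?_⟩
    · intro h
      have : c 0 = 0 := by
        rw [← hreprx 0, h]
        simp
      rw [hcdef] at this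
      simp only at this
      rw [hBdef, zprod_zero] at this
      simp at this
    · apply hext
      intro n
      rw [hrepr_adj, hrepr_smul, hreprx, hreprx]
      exact hrec n
end

section
/- Let T be a hyponormal bilateral weighted shift on H with nonzero weight sequence (β_n)_{n∈ℤ}, M = lim_{n→+∞} |β_n| and m = lim_{n→−∞} |β_n|. Then the residual spectrum of T equals the open annulus {λ ∈ ℂ : m < |λ| < M}; that is, λI − T is injective with non-dense range if and only if m < |λ| < M. -/
/-!
A vector `y` is orthogonal to the range of `λ - T` iff `T* y = conj λ • y`, and in coordinates
`c n = ⟪e n, y⟫` this says `‖β n‖ ‖c (n + 1)‖ = ‖λ‖ ‖c n‖`. Since `c` is square summable it tends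
to `0` at both ends. Hyponormality gives `m ≤ ‖β n‖ ≤ M`, so `‖λ‖ ≤ m` would make `‖c n‖`
nonincreasing and `M ≤ ‖λ‖` nondecreasing, either way forcing `c = 0`. Conversely, for
`m < ‖λ‖ < M` the solution of the recurrence decays geometrically at both ends, which gives such
a `y`. Eigenvectors of `T` obey the transposed recurrence `λ c (n + 1) = β n c n`, so for
`‖λ‖ < M` their coefficients are eventually nondecreasing, hence vanish.
-/

open Filter Topology
open scoped InnerProduct ComplexConjugate

section Sequences

variable {E : Type*} [NormedAddCommGroup E]

theorem Int.eq_zero_of_norm_le_norm_succ {c : ℤ → E} {N : ℤ}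
    (hle : ∀ n ≥ N, ‖c n‖ ≤ ‖c (n + 1)‖) (hc : Tendsto c atTop (𝓝 0)) {n : ℤ} (hn : N ≤ n) :
    c n = 0 := by
  have hmono : ∀ k ≥ n, ‖c n‖ ≤ ‖c k‖ := by
    intro k hk
    induction k, hk using Int.leInduction with
    | base => rfl
    | succ k hk ih => exact ih.trans (hle k (hn.trans hk))
  refine norm_le_zero_iff.mp (ge_of_tendsto (tendsto_zero_iff_norm_tendsto_zero.mp hc) ?_)
  exact eventually_atTop.mpr ⟨n, hmono⟩

theorem Int.eq_zero_of_norm_succ_le_norm {c : ℤ → E}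
    (hle : ∀ n, ‖c (n + 1)‖ ≤ ‖c n‖) (hc : Tendsto c atBot (𝓝 0)) : c = 0 := by
  funext n
  exact norm_le_zero_iff.mp <| (antitone_int_of_succ_le hle).ge_of_tendsto
    (tendsto_zero_iff_norm_tendsto_zero.mp hc) n

end Sequences

theorem HilbertBasis.tendsto_repr_cofinite {ι 𝕜 E : Type*} [RCLike 𝕜] [NormedAddCommGroup E]
    [InnerProductSpace 𝕜 E] (e : HilbertBasis ι 𝕜 E) (x : E) :
    Tendsto (e.repr x) cofinite (𝓝 0) := by
  have hsq : Tendsto (fun i => ‖e.repr x i‖ ^ 2) cofinite (𝓝 0) := by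
    simpa only [e.repr_apply_apply] using
      (e.orthonormal.inner_products_summable x).tendsto_cofinite_zero
  rw [tendsto_zero_iff_norm_tendsto_zero]
  simpa [Real.sqrt_sq (norm_nonneg _)] using hsq.sqrt

theorem HilbertBasis.tendsto_repr_atTop {𝕜 E : Type*} [RCLike 𝕜] [NormedAddCommGroup E]
    [InnerProductSpace 𝕜 E] (e : HilbertBasis ℤ 𝕜 E) (x : E) :
    Tendsto (e.repr x) atTop (𝓝 0) :=
  (e.tendsto_repr_cofinite x).mono_left (Int.cofinite_eq ▸ le_sup_right)

theorem HilbertBasis.tendsto_repr_atBot {𝕜 E : Type*} [RCLike 𝕜] [NormedAddCommGroup E]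
    [InnerProductSpace 𝕜 E] (e : HilbertBasis ℤ 𝕜 E) (x : E) :
    Tendsto (e.repr x) atBot (𝓝 0) :=
  (e.tendsto_repr_cofinite x).mono_left (Int.cofinite_eq ▸ le_sup_left)

theorem ContinuousLinearMap.denseRange_iff_ker_adjoint_eq_bot_s15 {𝕜 E F : Type*} [RCLike 𝕜]
    [NormedAddCommGroup E] [InnerProductSpace 𝕜 E] [CompleteSpace E]
    [NormedAddCommGroup F] [InnerProductSpace 𝕜 F] [CompleteSpace F] (A : E →L[𝕜] F) :
    DenseRange A ↔ (A†).ker = ⊥ := by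
  rw [← A.orthogonal_range, ← Submodule.topologicalClosure_eq_top_iff,
    ← Submodule.dense_iff_topologicalClosure_eq_top]
  simp [DenseRange, LinearMap.coe_range]

theorem ContinuousLinearMap.injective_smul_one_sub_iff {𝕜 E : Type*} [NormedField 𝕜]
    [NormedAddCommGroup E] [NormedSpace 𝕜 E] (T : E →L[𝕜] E) (lam : 𝕜) :
    Function.Injective (lam • (1 : E →L[𝕜] E) - T) ↔ ∀ x, T x = lam • x → x = 0 := by
  rw [injective_iff_map_eq_zero]
  simp [sub_eq_zero, eq_comm (a := lam • _)]

theorem ContinuousLinearMap.not_denseRange_smul_one_sub_iff_s15 {𝕜 E : Type*} [RCLike 𝕜]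
    [NormedAddCommGroup E] [InnerProductSpace 𝕜 E] [CompleteSpace E] (T : E →L[𝕜] E)
    (lam : 𝕜) : ¬ DenseRange (lam • (1 : E →L[𝕜] E) - T) ↔ ∃ y ≠ 0, (T†) y = conj lam • y := by
  rw [denseRange_iff_ker_adjoint_eq_bot_s15, map_sub, map_smulₛₗ, adjoint_one,
    Submodule.eq_bot_iff]
  simp [sub_eq_zero, eq_comm (a := conj lam • _), and_comm]

section Eigenseq

variable {K : Type*}

/-- The solution of `a * c n = b n * c (n + 1)` with `c 0 = 1`, i.e. an eigenvector for `a` of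
the backward shift with weights `b`. -/
def backwardShiftEigenseq [Field K] (a : K) (b : ℤ → K) : ℤ → K
  | (n : ℕ) => ∏ k ∈ Finset.range n, a / b k
  | .negSucc n => ∏ k ∈ Finset.range (n + 1), b (.negSucc k) / a

@[simp]
theorem backwardShiftEigenseq_zero [Field K] (a : K) (b : ℤ → K) :
    backwardShiftEigenseq a b 0 = 1 := by
  simp [backwardShiftEigenseq]

theorem backwardShiftEigenseq_ne_zero [Field K] {a : K} {b : ℤ → K} (ha : a ≠ 0)
    (hb : ∀ n, b n ≠ 0) (n : ℤ) : backwardShiftEigenseq a b n ≠ 0 := by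
  cases n <;>
    exact Finset.prod_ne_zero_iff.mpr fun k _ => div_ne_zero (by simp [*]) (by simp [*])

theorem mul_backwardShiftEigenseq [Field K] {a : K} {b : ℤ → K} (ha : a ≠ 0)
    (hb : ∀ n, b n ≠ 0) (n : ℤ) :
    a * backwardShiftEigenseq a b n = b n * backwardShiftEigenseq a b (n + 1) := by
  cases n with
  | ofNat n =>
    change a * ∏ k ∈ Finset.range n, a / b k = b n * ∏ k ∈ Finset.range (n + 1), a / b k
    rw [Finset.prod_range_succ]
    field_simp [hb n]
  | negSucc n =>
    have hsucc : backwardShiftEigenseq a b (.negSucc n + 1) =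
        ∏ k ∈ Finset.range n, b (.negSucc k) / a := by
      cases n <;> rfl
    change a * ∏ k ∈ Finset.range (n + 1), b (.negSucc k) / a = _
    rw [hsucc, Finset.prod_range_succ]
    field_simp

theorem norm_backwardShiftEigenseq_succ [NormedField K] {a : K} {b : ℤ → K} (ha : a ≠ 0)
    (hb : ∀ n, b n ≠ 0) (n : ℤ) :
    ‖backwardShiftEigenseq a b (n + 1)‖ = ‖a‖ / ‖b n‖ * ‖backwardShiftEigenseq a b n‖ := by
  rw [div_mul_eq_mul_div, eq_div_iff (norm_ne_zero_iff.mpr (hb n)), mul_comm, ← norm_mul,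
    ← norm_mul, mul_backwardShiftEigenseq ha hb]

theorem summable_norm_backwardShiftEigenseq [NormedField K] {a : K} {b : ℤ → K}
    (hb : ∀ n, b n ≠ 0) {m M : ℝ} (hm : Tendsto (fun n => ‖b n‖) atBot (𝓝 m))
    (hM : Tendsto (fun n => ‖b n‖) atTop (𝓝 M)) (hma : m < ‖a‖) (haM : ‖a‖ < M) :
    Summable fun n => ‖backwardShiftEigenseq a b n‖ := by
  have hm0 : 0 ≤ m := ge_of_tendsto' hm fun n => norm_nonneg _
  have ha : a ≠ 0 := norm_pos_iff.mp (hm0.trans_lt hma)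
  have hc := backwardShiftEigenseq_ne_zero ha hb
  have hsucc := norm_backwardShiftEigenseq_succ ha hb
  apply Summable.of_nat_of_neg
  · refine summable_of_ratio_test_tendsto_lt_one ((div_lt_one (by linarith)).mpr haM)
      (.of_forall fun n => by simpa using hc n) ?_
    have hlim : Tendsto (fun n : ℕ => ‖a‖ / ‖b n‖) atTop (𝓝 (‖a‖ / M)) :=
      tendsto_const_nhds.div (hM.comp tendsto_natCast_atTop_atTop) (by linarith)
    refine hlim.congr fun n => ?_
    rw [norm_norm, norm_norm, Nat.cast_succ, hsucc]
    field_simp [norm_ne_zero_iff.mpr (hc n)]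
  · refine summable_of_ratio_test_tendsto_lt_one ((div_lt_one (norm_pos_iff.mpr ha)).mpr hma)
      (.of_forall fun n => by simpa using hc _) ?_
    have hlim : Tendsto (fun n : ℕ => ‖b (-(n + 1 : ℕ))‖ / ‖a‖) atTop (𝓝 (m / ‖a‖)) :=
      (hm.comp (tendsto_neg_atTop_atBot.comp
        (tendsto_natCast_atTop_atTop.comp (tendsto_add_atTop_nat 1)))).div_const _
    refine hlim.congr fun n => ?_
    have := hsucc (-(n + 1 : ℕ))
    rw [Nat.cast_succ, show -((n : ℤ) + 1) + 1 = -n by ring] at this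
    rw [norm_norm, norm_norm, Nat.cast_succ, this]
    field_simp [norm_ne_zero_iff.mpr (hc _), norm_ne_zero_iff.mpr ha]

end Eigenseq

section WeightedShift

variable {H : Type*} [NormedAddCommGroup H] [InnerProductSpace ℂ H] [CompleteSpace H]
  {e : HilbertBasis ℤ ℂ H} {β : ℤ → ℂ} {T : H →L[ℂ] H}

theorem repr_adjoint_apply_of_weightedShift (hT : ∀ n, T (e n) = β n • e (n + 1)) (y : H)
    (n : ℤ) : e.repr ((T†) y) n = conj (β n) * e.repr y (n + 1) := by
  rw [e.repr_apply_apply, e.repr_apply_apply, ContinuousLinearMap.adjoint_inner_right, hT,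
    inner_smul_left]

theorem adjoint_apply_succ_of_weightedShift (hT : ∀ n, T (e n) = β n • e (n + 1)) (n : ℤ) :
    (T†) (e (n + 1)) = conj (β n) • e n := by
  classical
  apply e.repr.injective
  ext k
  rw [repr_adjoint_apply_of_weightedShift hT, map_smul, e.repr_self, e.repr_self]
  by_cases hk : k = n <;> simp [lp.single_apply, hk]

theorem repr_apply_succ_of_weightedShift (hT : ∀ n, T (e n) = β n • e (n + 1)) (x : H)
    (n : ℤ) : e.repr (T x) (n + 1) = β n * e.repr x n := by
  rw [e.repr_apply_apply, ← ContinuousLinearMap.adjoint_inner_left,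
    adjoint_apply_succ_of_weightedShift hT, inner_smul_left, Complex.conj_conj,
    e.repr_apply_apply]

theorem eq_zero_of_weightedShift_apply_eq_smul (hT : ∀ n, T (e n) = β n • e (n + 1))
    (hβ : ∀ n, β n ≠ 0) {lam : ℂ} (hlam : ∀ᶠ n in atTop, ‖lam‖ ≤ ‖β n‖) {x : H}
    (hx : T x = lam • x) : x = 0 := by
  set c : ℤ → ℂ := ⇑(e.repr x)
  have hrec (n : ℤ) : β n * c n = lam * c (n + 1) := by
    rw [← repr_apply_succ_of_weightedShift hT, hx, map_smul]
    rfl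
  obtain ⟨N, hN⟩ := eventually_atTop.mp hlam
  have hle (n : ℤ) (hn : n ≥ N) : ‖c n‖ ≤ ‖c (n + 1)‖ := by
    refine le_of_mul_le_mul_left ?_ (norm_pos_iff.mpr (hβ n))
    calc ‖β n‖ * ‖c n‖ = ‖lam‖ * ‖c (n + 1)‖ := by simpa using congrArg norm (hrec n)
      _ ≤ ‖β n‖ * ‖c (n + 1)‖ := by gcongr; exact hN n hn
  have htail (n : ℤ) (hn : N ≤ n) : c n = 0 :=
    Int.eq_zero_of_norm_le_norm_succ hle (e.tendsto_repr_atTop x) hn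
  have hzero (n : ℤ) : c n = 0 := by
    obtain hn | hn := le_total N n
    · exact htail n hn
    induction n, hn using Int.leInductionDown with
    | base => exact htail N le_rfl
    | pred k _ ih =>
      have := hrec (k - 1)
      rw [sub_add_cancel, ih, mul_zero, mul_eq_zero] at this
      exact this.resolve_left (hβ _)
  exact e.repr.map_eq_zero_iff.mp (lp.ext (funext hzero))

theorem norm_mul_norm_repr_succ_of_adjoint_weightedShift
    (hT : ∀ n, T (e n) = β n • e (n + 1)) {lam : ℂ} {y : H} (hy : (T†) y = conj lam • y) (n : ℤ) :
    ‖β n‖ * ‖e.repr y (n + 1)‖ = ‖lam‖ * ‖e.repr y n‖ := by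
  have := congrArg (‖e.repr · n‖) hy
  simpa [repr_adjoint_apply_of_weightedShift hT] using this

theorem lt_norm_of_adjoint_weightedShift_apply_eq_smul (hT : ∀ n, T (e n) = β n • e (n + 1))
    (hβ : ∀ n, β n ≠ 0) {m : ℝ} (hm : ∀ n, m ≤ ‖β n‖) {lam : ℂ} {y : H}
    (hy : (T†) y = conj lam • y) (hy0 : y ≠ 0) : m < ‖lam‖ := by
  set c : ℤ → ℂ := ⇑(e.repr y)
  have hnorm := norm_mul_norm_repr_succ_of_adjoint_weightedShift hT hy
  by_contra! hlam
  suffices c = 0 from hy0 (e.repr.map_eq_zero_iff.mp (lp.ext this))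
  rcases eq_or_ne lam 0 with rfl | hlam0
  · funext n
    simpa [hβ] using hnorm (n - 1)
  · refine Int.eq_zero_of_norm_succ_le_norm (fun n => ?_) (e.tendsto_repr_atBot y)
    refine le_of_mul_le_mul_left ?_ (norm_pos_iff.mpr hlam0)
    calc ‖lam‖ * ‖c (n + 1)‖ ≤ ‖β n‖ * ‖c (n + 1)‖ := by gcongr; exact hlam.trans (hm n)
      _ = ‖lam‖ * ‖c n‖ := hnorm n

theorem norm_lt_of_adjoint_weightedShift_apply_eq_smul (hT : ∀ n, T (e n) = β n • e (n + 1))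
    (hβ : ∀ n, β n ≠ 0) {M : ℝ} (hM : ∀ n, ‖β n‖ ≤ M) {lam : ℂ} {y : H}
    (hy : (T†) y = conj lam • y) (hy0 : y ≠ 0) : ‖lam‖ < M := by
  set c : ℤ → ℂ := ⇑(e.repr y)
  have hnorm := norm_mul_norm_repr_succ_of_adjoint_weightedShift hT hy
  by_contra! hlam
  have hle (n : ℤ) : ‖c n‖ ≤ ‖c (n + 1)‖ := by
    refine le_of_mul_le_mul_left ?_ (norm_pos_iff.mpr (hβ n))
    calc ‖β n‖ * ‖c n‖ ≤ ‖lam‖ * ‖c n‖ := by gcongr; exact (hM n).trans hlam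
      _ = ‖β n‖ * ‖c (n + 1)‖ := (hnorm n).symm
  refine hy0 (e.repr.map_eq_zero_iff.mp (lp.ext (funext fun n => ?_)))
  exact Int.eq_zero_of_norm_le_norm_succ (fun k _ => hle k) (e.tendsto_repr_atTop y) le_rfl

theorem exists_adjoint_weightedShift_apply_eq_smul (hT : ∀ n, T (e n) = β n • e (n + 1))
    (hβ : ∀ n, β n ≠ 0) {m M : ℝ} (hm : Tendsto (fun n => ‖β n‖) atBot (𝓝 m))
    (hM : Tendsto (fun n => ‖β n‖) atTop (𝓝 M)) {lam : ℂ} (hmlam : m < ‖lam‖)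
    (hlamM : ‖lam‖ < M) : ∃ y ≠ 0, (T†) y = conj lam • y := by
  set c := backwardShiftEigenseq (conj lam) fun n => conj (β n)
  have hβc (n : ℤ) : conj (β n) ≠ 0 := by simpa using hβ n
  have hc : Memℓp c 2 := by
    refine Memℓp.of_exponent_ge (q := 1) (memℓp_gen ?_) (by norm_num)
    simpa using summable_norm_backwardShiftEigenseq hβc (by simpa using hm) (by simpa using hM)
      (by simpa using hmlam) (by simpa using hlamM)
  have hlam : conj lam ≠ 0 := by
    simpa using ((ge_of_tendsto' hm fun n => norm_nonneg _).trans_lt hmlam)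
  refine ⟨e.repr.symm ⟨c, hc⟩, fun h => ?_, e.repr.injective (lp.ext (funext fun n => ?_))⟩
  · simpa [c] using congrArg (e.repr · 0) h
  · rw [repr_adjoint_apply_of_weightedShift hT, map_smul, LinearIsometryEquiv.apply_symm_apply]
    exact (mul_backwardShiftEigenseq hlam hβc n).symm

end WeightedShift

/-- The residual spectrum of a hyponormal bilateral weighted shift with nonzero
weights is exactly the open annulus `{λ : m < ‖λ‖ < M}`: `λI - T` is injective
with non-dense range iff `m < ‖λ‖ < M`. -/
theorem residualSpectrum_of_hyponormal_bilateral_weighted_shift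
    {H : Type*} [NormedAddCommGroup H] [InnerProductSpace ℂ H] [CompleteSpace H]
    (e : HilbertBasis ℤ ℂ H) (β : ℤ → ℂ) (T : H →L[ℂ] H)
    (hT : ∀ n : ℤ, T (e n) = β n • e (n + 1))
    (hmono : ∀ n : ℤ, ‖β n‖ ≤ ‖β (n + 1)‖)
    (hnz : ∀ n : ℤ, β n ≠ 0)
    (M : ℝ) (hM : Filter.Tendsto (fun n : ℤ => ‖β n‖) Filter.atTop (nhds M))
    (m : ℝ) (hm : Filter.Tendsto (fun n : ℤ => ‖β n‖) Filter.atBot (nhds m)) :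
    {lam : ℂ | Function.Injective ⇑(lam • (1 : H →L[ℂ] H) - T) ∧
        ¬ DenseRange ⇑(lam • (1 : H →L[ℂ] H) - T)}
      = {lam : ℂ | m < ‖lam‖ ∧ ‖lam‖ < M} := by
  have hnorm_mono : Monotone fun n => ‖β n‖ := monotone_int_of_le_succ hmono
  ext lam
  simp only [Set.mem_ofPred_eq, T.not_denseRange_smul_one_sub_iff_s15]
  constructor
  · rintro ⟨-, y, hy0, hy⟩
    exact ⟨lt_norm_of_adjoint_weightedShift_apply_eq_smul hT hnz
        (hnorm_mono.le_of_tendsto hm) hy hy0,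
      norm_lt_of_adjoint_weightedShift_apply_eq_smul hT hnz
        (hnorm_mono.ge_of_tendsto hM) hy hy0⟩
  · rintro ⟨hmlam, hlamM⟩
    refine ⟨(T.injective_smul_one_sub_iff lam).mpr fun x => ?_,
      exists_adjoint_weightedShift_apply_eq_smul hT hnz hm hM hmlam hlamM⟩
    exact eq_zero_of_weightedShift_apply_eq_smul hT hnz
      (hM.eventually (eventually_ge_nhds hlamM))
end

section
/- Let T be a hyponormal bilateral weighted shift on H with nonzero weight sequence (β_n)_{n∈ℤ}, M = lim_{n→+∞} |β_n| and m = lim_{n→−∞} |β_n|. Then the spectrum of T (and of its adjoint T*) is exactly the closed annulus {λ ∈ ℂ : m ≤ |λ| ≤ M}. -/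
/-!
Since `m ≤ ‖β n‖ ≤ M`, we have `‖T‖ ≤ M`, and both `T` and `T†` are bounded below by `m`; hence for
`‖λ‖ < m` both `λ - T` and its adjoint are bounded below, so `λ - T` is invertible. Conversely,
truncations `x = ∑_{n<B} d n • e (a + n)` of a formal eigenvector are approximate eigenvectors:
the recurrence defining `d` makes `(T - λ) x`, resp. `(T† - λ) x`, telescope to two boundary terms
of norm at most `M`, while `‖x‖` can be made arbitrarily large. For `‖λ‖ = M` one uses `T` and a
window far to the right, where `‖β n / λ‖ ≈ 1` keeps `‖d n‖` near `1`. For `m ≤ ‖λ‖ < M` one uses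
`T†`, whose spectrum is the conjugate of that of `T`, and a window starting far to the left, where
`‖λ / β n‖ ≳ 1`, ending once `d` has decayed, as it must since `‖β n‖ → M > ‖λ‖`. Finally, if
`m = 0`, the vectors `e n` with `n → -∞` show that `0` is an approximate eigenvalue.
-/

open Filter Topology Finset ComplexConjugate
open scoped InnerProductSpace

section Spectrum

variable {𝕜 E : Type*}

theorem exists_mul_le_norm_sub_smul_of_notMem_spectrum [NontriviallyNormedField 𝕜]
    [NormedAddCommGroup E] [NormedSpace 𝕜 E] {A : E →L[𝕜] E} {μ : 𝕜}
    (hμ : μ ∉ spectrum 𝕜 A) : ∃ c > 0, ∀ x, c * ‖x‖ ≤ ‖A x - μ • x‖ := by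
  obtain ⟨c, hc, hbound⟩ := antilipschitzWith_iff_exists_mul_le_norm.mp <|
    ContinuousLinearMap.antilipschitz_of_isEmbedding _
      (ContinuousLinearMap.isHomeomorph_of_isUnit (spectrum.notMem_iff.mp hμ)).isEmbedding
  refine ⟨c, hc, fun x => (hbound x).trans_eq ?_⟩
  rw [← norm_neg]
  simp [Algebra.algebraMap_eq_smul_one]

theorem mem_spectrum_of_forall_exists_norm_sub_smul_le [NontriviallyNormedField 𝕜]
    [NormedAddCommGroup E] [NormedSpace 𝕜 E] {A : E →L[𝕜] E} {μ : 𝕜}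
    (h : ∀ ε > 0, ∃ x ≠ 0, ‖A x - μ • x‖ ≤ ε * ‖x‖) : μ ∈ spectrum 𝕜 A := by
  by_contra hμ
  obtain ⟨c, hc, hbound⟩ := exists_mul_le_norm_sub_smul_of_notMem_spectrum hμ
  obtain ⟨x, hx, hAx⟩ := h (c / 2) (half_pos hc)
  have := (hbound x).trans hAx
  have : 0 < ‖x‖ := norm_pos_iff.mpr hx
  nlinarith

theorem mem_spectrum_of_forall_exists_le_norm [NontriviallyNormedField 𝕜]
    [NormedAddCommGroup E] [NormedSpace 𝕜 E] {A : E →L[𝕜] E} {μ : 𝕜} (C : ℝ)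
    (h : ∀ K : ℝ, ∃ x, K ≤ ‖x‖ ∧ ‖A x - μ • x‖ ≤ C) : μ ∈ spectrum 𝕜 A := by
  by_contra hμ
  obtain ⟨c, hc, hbound⟩ := exists_mul_le_norm_sub_smul_of_notMem_spectrum hμ
  obtain ⟨x, hKx, hAx⟩ := h (C / c + 1)
  have := (hbound x).trans hAx
  have : c * (C / c + 1) ≤ c * ‖x‖ := by gcongr
  rw [mul_add, mul_div_cancel₀ _ hc.ne'] at this
  linarith

variable [RCLike 𝕜] [NormedAddCommGroup E] [InnerProductSpace 𝕜 E] [CompleteSpace E]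

open ContinuousLinearMap in
theorem isUnit_of_forall_le_norm_of_forall_le_norm_adjoint {A : E →L[𝕜] E} {c : ℝ} (hc : 0 < c)
    (hA : ∀ x, c * ‖x‖ ≤ ‖A x‖) (hA' : ∀ x, c * ‖x‖ ≤ ‖adjoint A x‖) : IsUnit A := by
  rw [isUnit_iff_bijective, bijective_iff_dense_range_and_antilipschitz]
  refine ⟨?_, antilipschitzWith_iff_exists_mul_le_norm.mpr ⟨c, hc, hA⟩⟩
  rw [Submodule.topologicalClosure_eq_top_iff, orthogonal_range, Submodule.eq_bot_iff]
  intro x hx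
  have := hA' x
  rw [LinearMap.mem_ker, coe_coe] at hx
  rw [hx, norm_zero] at this
  exact norm_le_zero_iff.mp (nonpos_of_mul_nonpos_right this hc)

theorem spectrum_adjoint (A : E →L[𝕜] E) :
    spectrum 𝕜 (ContinuousLinearMap.adjoint A) = star (spectrum 𝕜 A) := by
  rw [← ContinuousLinearMap.star_eq_adjoint, spectrum.map_star]

open ContinuousLinearMap in
theorem notMem_spectrum_of_norm_lt {A : E →L[𝕜] E} {c : ℝ}
    (hA : ∀ x, c * ‖x‖ ≤ ‖A x‖) (hA' : ∀ x, c * ‖x‖ ≤ ‖adjoint A x‖) {μ : 𝕜} (hμ : ‖μ‖ < c) :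
    μ ∉ spectrum 𝕜 A := by
  have bound {B : E →L[𝕜] E} {ν : 𝕜} (hν : ‖ν‖ = ‖μ‖) (hB : ∀ x, c * ‖x‖ ≤ ‖B x‖) (x : E) :
      (c - ‖μ‖) * ‖x‖ ≤ ‖(algebraMap 𝕜 (E →L[𝕜] E) ν - B) x‖ := by
    rw [sub_apply, ContinuousLinearMap.algebraMap_apply, norm_sub_rev, sub_mul]
    have := norm_sub_norm_le (B x) (ν • x)
    rw [norm_smul, hν] at this
    linarith [hB x]
  have hadj : adjoint (algebraMap 𝕜 (E →L[𝕜] E) μ - A)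
      = algebraMap 𝕜 (E →L[𝕜] E) (conj μ) - adjoint A := by
    simp [← star_eq_adjoint, star_sub, Algebra.algebraMap_eq_smul_one, star_smul]
  rw [spectrum.notMem_iff]
  refine isUnit_of_forall_le_norm_of_forall_le_norm_adjoint (sub_pos.mpr hμ) (bound rfl hA) ?_
  rw [hadj]
  exact bound (RCLike.norm_conj μ) hA'

end Spectrum

theorem tendsto_prod_range_shift {M : Type*} [CommMonoid M] [TopologicalSpace M] [ContinuousMul M]
    {f : ℤ → M} {l : Filter ℤ} {μ : M} (hf : Tendsto f l (𝓝 μ))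
    (hl : ∀ j : ℤ, Tendsto (· + j) l l) (n : ℕ) :
    Tendsto (fun a => ∏ j ∈ range n, f (a + j)) l (𝓝 (μ ^ n)) := by
  simpa using tendsto_finsetProd (range n) fun j _ => hf.comp (hl j)

theorem tendsto_prod_range_zero {𝕜 : Type*} [NormedField 𝕜] [CompleteSpace 𝕜] {g : ℕ → 𝕜}
    {q : ℝ} (hq : q < 1) (hg : ∀ᶠ n in atTop, ‖g n‖ ≤ q) :
    Tendsto (fun n => ∏ j ∈ range n, g j) atTop (𝓝 0) := by
  refine (summable_of_ratio_norm_eventually_le hq (hg.mono fun n hn => ?_)).tendsto_atTop_zero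
  rw [prod_range_succ, norm_mul, mul_comm]
  gcongr

namespace HilbertBasis

variable {ι 𝕜 E : Type*} [RCLike 𝕜] [NormedAddCommGroup E] [InnerProductSpace 𝕜 E]

theorem hasSum_norm_sq_inner (e : HilbertBasis ι 𝕜 E) (x : E) :
    HasSum (fun i => ‖⟪e i, x⟫_𝕜‖ ^ 2) (‖x‖ ^ 2) := by
  have := lp.hasSum_norm (p := 2) (by norm_num) (e.repr x)
  simpa only [ENNReal.toReal_ofNat, Real.rpow_two, LinearIsometryEquiv.norm_map,
    e.repr_apply_apply] using this

theorem hasSum_norm_sq_of_inner_eq_mul (e : HilbertBasis ι 𝕜 E) (σ : ι ≃ ι) {b : ι → 𝕜}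
    {x y : E} (h : ∀ i, ⟪e i, y⟫_𝕜 = b i * ⟪e (σ i), x⟫_𝕜) :
    HasSum (fun i => ‖b i‖ ^ 2 * ‖⟪e (σ i), x⟫_𝕜‖ ^ 2) (‖y‖ ^ 2) := by
  simpa [h, mul_pow] using e.hasSum_norm_sq_inner y

theorem norm_le_of_inner_eq_mul (e : HilbertBasis ι 𝕜 E) (σ : ι ≃ ι) {b : ι → 𝕜} {x y : E}
    (h : ∀ i, ⟪e i, y⟫_𝕜 = b i * ⟪e (σ i), x⟫_𝕜) {C : ℝ} (hC : 0 ≤ C) (hb : ∀ i, ‖b i‖ ≤ C) :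
    ‖y‖ ≤ C * ‖x‖ := by
  have hx := (σ.hasSum_iff.mpr (e.hasSum_norm_sq_inner x)).mul_left (C ^ 2)
  refine le_of_sq_le_sq ?_ (by positivity)
  rw [mul_pow]
  refine hasSum_le (fun i => ?_) (e.hasSum_norm_sq_of_inner_eq_mul σ h) hx
  simp only [Function.comp_apply]
  gcongr
  exact hb i

theorem le_norm_of_inner_eq_mul (e : HilbertBasis ι 𝕜 E) (σ : ι ≃ ι) {b : ι → 𝕜} {x y : E}
    (h : ∀ i, ⟪e i, y⟫_𝕜 = b i * ⟪e (σ i), x⟫_𝕜) {c : ℝ} (hc : 0 ≤ c) (hb : ∀ i, c ≤ ‖b i‖) :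
    c * ‖x‖ ≤ ‖y‖ := by
  have hx := (σ.hasSum_iff.mpr (e.hasSum_norm_sq_inner x)).mul_left (c ^ 2)
  refine le_of_sq_le_sq ?_ (norm_nonneg _)
  rw [mul_pow]
  refine hasSum_le (fun i => ?_) hx (e.hasSum_norm_sq_of_inner_eq_mul σ h)
  simp only [Function.comp_apply]
  gcongr
  exact hb i

noncomputable def window (e : HilbertBasis ℤ 𝕜 E) (a : ℤ) (d : ℕ → 𝕜) (B : ℕ) : E :=
  ∑ n ∈ range B, d n • e (a + n)

theorem le_norm_window (e : HilbertBasis ℤ 𝕜 E) (a : ℤ) {d : ℕ → 𝕜} {L B : ℕ} (hLB : L ≤ B)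
    {c K : ℝ} (hc : 0 ≤ c) (hd : ∀ n < L, c ≤ ‖d n‖) (hK : K ^ 2 ≤ c ^ 2 * L) :
    K ≤ ‖e.window a d B‖ := by
  have hv : Orthonormal 𝕜 fun n : ℕ => e (a + n) :=
    e.orthonormal.comp _ fun p q h => by simpa using h
  refine le_of_sq_le_sq ?_ (norm_nonneg _)
  calc K ^ 2 ≤ ∑ n ∈ range L, c ^ 2 := by simpa [mul_comm] using hK
    _ ≤ ∑ n ∈ range L, ‖d n‖ ^ 2 := by
      gcongr with n hn
      exact hd n (mem_range.mp hn)
    _ = ∑ n ∈ range L, ‖⟪e (a + n), e.window a d B⟫_𝕜‖ ^ 2 := by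
      refine sum_congr rfl fun n hn => ?_
      rw [window, hv.inner_right_sum d (mem_range.mpr ((mem_range.mp hn).trans_le hLB))]
    _ ≤ ‖e.window a d B‖ ^ 2 := hv.sum_inner_products_le _

end HilbertBasis

section WeightedShift

variable {H : Type*} [NormedAddCommGroup H] [InnerProductSpace ℂ H]
  {e : HilbertBasis ℤ ℂ H} {β : ℤ → ℂ} {T : H →L[ℂ] H}

theorem inner_basis_weightedShift_apply (hT : ∀ n, T (e n) = β n • e (n + 1)) (x : H) (k : ℤ) :
    ⟪e k, T x⟫_ℂ = β (k - 1) * ⟪e (k - 1), x⟫_ℂ := by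
  have : (innerSL ℂ (e k)).comp T = β (k - 1) • innerSL ℂ (e (k - 1)) := by
    refine ContinuousLinearMap.ext_on
      (Submodule.dense_iff_topologicalClosure_eq_top.mpr e.dense_span) fun _ ⟨i, hi⟩ => ?_
    subst hi
    simp only [ContinuousLinearMap.comp_apply, smul_apply, innerSL_apply_apply,
      hT, inner_smul_right, orthonormal_iff_ite.mp e.orthonormal, smul_eq_mul]
    by_cases hik : i = k - 1
    · simp [hik]
    · rw [if_neg (by omega), if_neg (Ne.symm hik)]
      simp
  simpa using congrArg (· x) this

theorem inner_basis_adjoint_weightedShift_apply [CompleteSpace H]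
    (hT : ∀ n, T (e n) = β n • e (n + 1)) (x : H) (k : ℤ) :
    ⟪e k, T.adjoint x⟫_ℂ = conj (β k) * ⟪e (k + 1), x⟫_ℂ := by
  rw [ContinuousLinearMap.adjoint_inner_right, hT, inner_smul_left]

theorem adjoint_weightedShift_apply_basis [CompleteSpace H]
    (hT : ∀ n, T (e n) = β n • e (n + 1)) (k : ℤ) :
    T.adjoint (e k) = conj (β (k - 1)) • e (k - 1) :=
  ext_inner_right ℂ fun y => by
    rw [ContinuousLinearMap.adjoint_inner_left, inner_basis_weightedShift_apply hT,
      inner_smul_left, Complex.conj_conj]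

theorem norm_weightedShift_apply_le (hT : ∀ n, T (e n) = β n • e (n + 1)) {C : ℝ} (hC : 0 ≤ C)
    (hβ : ∀ n, ‖β n‖ ≤ C) (x : H) : ‖T x‖ ≤ C * ‖x‖ :=
  e.norm_le_of_inner_eq_mul (Equiv.subRight 1) (inner_basis_weightedShift_apply hT x) hC
    fun _ => hβ _

theorem le_norm_weightedShift_apply (hT : ∀ n, T (e n) = β n • e (n + 1)) {c : ℝ} (hc : 0 ≤ c)
    (hβ : ∀ n, c ≤ ‖β n‖) (x : H) : c * ‖x‖ ≤ ‖T x‖ :=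
  e.le_norm_of_inner_eq_mul (Equiv.subRight 1) (inner_basis_weightedShift_apply hT x) hc
    fun _ => hβ _

theorem le_norm_adjoint_weightedShift_apply [CompleteSpace H]
    (hT : ∀ n, T (e n) = β n • e (n + 1)) {c : ℝ} (hc : 0 ≤ c) (hβ : ∀ n, c ≤ ‖β n‖) (x : H) :
    c * ‖x‖ ≤ ‖T.adjoint x‖ :=
  e.le_norm_of_inner_eq_mul (Equiv.addRight 1) (inner_basis_adjoint_weightedShift_apply hT x) hc
    fun n => (hβ n).trans_eq (RCLike.norm_conj _).symm

theorem weightedShift_window_sub (hT : ∀ n, T (e n) = β n • e (n + 1)) {μ : ℂ} {a : ℤ}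
    {d : ℕ → ℂ} (hd : ∀ n : ℕ, μ * d (n + 1) = β (a + n) * d n) (B : ℕ) :
    T (e.window a d B) - μ • e.window a d B = (μ * d B) • e (a + B) - (μ * d 0) • e a := by
  let g (n : ℕ) : H := (μ * d n) • e (a + n)
  have hT_sum : T (e.window a d B) = ∑ n ∈ range B, g (n + 1) := by
    refine (map_sum _ _ _).trans (sum_congr rfl fun n _ => ?_)
    rw [map_smul, hT, smul_smul, mul_comm, ← hd]
    simp [g, add_assoc]
  have hμ_sum : μ • e.window a d B = ∑ n ∈ range B, g n := by
    simp [g, HilbertBasis.window, smul_sum, smul_smul]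
  rw [hT_sum, hμ_sum, ← sum_sub_distrib, sum_range_sub]
  simp [g]

theorem adjoint_weightedShift_window_sub [CompleteSpace H]
    (hT : ∀ n, T (e n) = β n • e (n + 1)) {μ : ℂ} {a : ℤ} {d : ℕ → ℂ}
    (hd : ∀ n : ℕ, conj (β (a + n)) * d (n + 1) = μ * d n) (B : ℕ) :
    T.adjoint (e.window a d B) - μ • e.window a d B
      = (conj (β (a - 1)) * d 0) • e (a - 1) - (conj (β (a + B - 1)) * d B) • e (a + B - 1) := by
  let h (n : ℕ) : H := (conj (β (a + n - 1)) * d n) • e (a + n - 1)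
  have hT_sum : T.adjoint (e.window a d B) = ∑ n ∈ range B, h n := by
    refine (map_sum _ _ _).trans (sum_congr rfl fun n _ => ?_)
    rw [map_smul, adjoint_weightedShift_apply_basis hT, smul_smul, mul_comm]
  have hμ_sum : μ • e.window a d B = ∑ n ∈ range B, h (n + 1) := by
    rw [HilbertBasis.window, smul_sum]
    refine sum_congr rfl fun n _ => ?_
    simp only [h, smul_smul, Nat.cast_add, Nat.cast_one, add_sub_cancel_right, ← add_assoc, hd]
  rw [hT_sum, hμ_sum, ← sum_sub_distrib, sum_range_sub']
  simp [h]

theorem mem_spectrum_weightedShift_of_norm_eq (hT : ∀ n, T (e n) = β n • e (n + 1)) {M : ℝ}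
    (hβM : ∀ n, ‖β n‖ ≤ M) (hM : Tendsto (fun n => ‖β n‖) atTop (𝓝 M)) {μ : ℂ} (hμ : ‖μ‖ = M)
    (hμ0 : μ ≠ 0) : μ ∈ spectrum ℂ T := by
  have hM0 : 0 < M := hμ ▸ norm_pos_iff.mpr hμ0
  refine mem_spectrum_of_forall_exists_le_norm (2 * M) fun K => ?_
  obtain ⟨L, hL⟩ := exists_nat_ge (4 * K ^ 2)
  have hflat : ∀ᶠ a in atTop, ∀ n ∈ range L, 1 / 2 < ∏ j ∈ range n, ‖β (a + j)‖ / M := by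
    refine (eventually_all_finset _).mpr fun n _ => ?_
    have := tendsto_prod_range_shift (hM.div_const M)
      (fun j => tendsto_atTop_add_const_right _ j tendsto_id) n
    rw [div_self hM0.ne', one_pow] at this
    exact this.eventually (lt_mem_nhds (by norm_num))
  obtain ⟨a, ha⟩ := hflat.exists
  let d (n : ℕ) := ∏ j ∈ range n, β (a + j) / μ
  have hd_norm (n : ℕ) : ‖d n‖ = ∏ j ∈ range n, ‖β (a + j)‖ / M := by
    simp [d, norm_prod, hμ]
  have hd (n : ℕ) : μ * d (n + 1) = β (a + n) * d n := by
    simp only [d, prod_range_succ]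
    field_simp
  refine ⟨e.window a d L, e.le_norm_window a le_rfl (c := 1 / 2) (by norm_num)
    (fun n hn => (hd_norm n).symm ▸ (ha n (mem_range.mpr hn)).le) (by linarith), ?_⟩
  rw [weightedShift_window_sub hT hd]
  have hdL : ‖d L‖ ≤ 1 := (hd_norm L).trans_le <|
    prod_le_one (fun _ _ => by positivity) fun j _ => div_le_one_of_le₀ (hβM _) hM0.le
  calc _ ≤ ‖(μ * d L) • e (a + L)‖ + ‖(μ * d 0) • e a‖ := norm_sub_le _ _
    _ = M * ‖d L‖ + M := by simp [norm_smul, e.orthonormal.1, hμ, d]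
    _ ≤ 2 * M := by nlinarith

theorem mem_spectrum_adjoint_weightedShift [CompleteSpace H]
    (hT : ∀ n, T (e n) = β n • e (n + 1)) (hnz : ∀ n, β n ≠ 0) {m M : ℝ}
    (hβM : ∀ n, ‖β n‖ ≤ M) (hM : Tendsto (fun n => ‖β n‖) atTop (𝓝 M))
    (hm : Tendsto (fun n => ‖β n‖) atBot (𝓝 m)) {μ : ℂ} (hmμ : m ≤ ‖μ‖) (hμM : ‖μ‖ < M)
    (hμ0 : μ ≠ 0) : μ ∈ spectrum ℂ T.adjoint := by
  have hr : 0 < ‖μ‖ := norm_pos_iff.mpr hμ0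
  have hm0 : 0 ≤ m := ge_of_tendsto' hm fun _ => norm_nonneg _
  refine mem_spectrum_of_forall_exists_le_norm (2 * M) fun K => ?_
  obtain ⟨L, hL⟩ := exists_nat_ge (4 * K ^ 2)
  have hflat : ∀ᶠ a in atBot, ∀ n ∈ range L, ∏ j ∈ range n, ‖β (a + j)‖ / ‖μ‖ < 2 := by
    refine (eventually_all_finset _).mpr fun n _ => ?_
    refine (tendsto_prod_range_shift (hm.div_const ‖μ‖)
      (fun j => tendsto_atBot_add_const_right _ j tendsto_id) n).eventually (gt_mem_nhds ?_)
    calc (m / ‖μ‖) ^ n ≤ 1 := pow_le_one₀ (by positivity) (div_le_one_of_le₀ hmμ hr.le)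
      _ < 2 := by norm_num
  obtain ⟨a, ha⟩ := hflat.exists
  let d (n : ℕ) := ∏ j ∈ range n, μ / conj (β (a + j))
  have hd_norm (n : ℕ) : ‖d n‖ = (∏ j ∈ range n, ‖β (a + j)‖ / ‖μ‖)⁻¹ := by
    simp [d, norm_prod]
  have hd (n : ℕ) : conj (β (a + n)) * d (n + 1) = μ * d n := by
    have := (map_ne_zero (starRingEnd ℂ)).mpr (hnz (a + n))
    simp only [d, prod_range_succ]
    field_simp
  have hdecay : Tendsto d atTop (𝓝 0) := by
    obtain ⟨r, hμr, hrM⟩ := exists_between hμM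
    refine tendsto_prod_range_zero ((div_lt_one (hr.trans hμr)).mpr hμr) ?_
    have ha_top : Tendsto (fun j : ℕ => a + (j : ℤ)) atTop atTop :=
      tendsto_atTop_add_const_left _ a tendsto_natCast_atTop_atTop
    filter_upwards [(hM.comp ha_top).eventually (lt_mem_nhds hrM)] with j hj
    rw [norm_div, RCLike.norm_conj]
    exact div_le_div_of_nonneg_left hr.le (hr.trans hμr) hj.le
  obtain ⟨B, hLB, hdB⟩ := ((eventually_ge_atTop L).and
    ((tendsto_zero_iff_norm_tendsto_zero.mp hdecay).eventually (ge_mem_nhds one_pos))).exists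
  refine ⟨e.window a d B, e.le_norm_window a hLB (c := 1 / 2) (by norm_num) (fun n hn => ?_)
    (by linarith), ?_⟩
  · have hpos : 0 < ∏ j ∈ range n, ‖β (a + j)‖ / ‖μ‖ :=
      prod_pos fun j _ => div_pos (norm_pos_iff.mpr (hnz _)) hr
    rw [hd_norm, ← one_div]
    exact one_div_le_one_div_of_le hpos (ha n (mem_range.mpr hn)).le
  rw [adjoint_weightedShift_window_sub hT hd]
  calc _ ≤ ‖(conj (β (a - 1)) * d 0) • e (a - 1)‖
        + ‖(conj (β (a + B - 1)) * d B) • e (a + B - 1)‖ := norm_sub_le _ _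
    _ = ‖β (a - 1)‖ + ‖β (a + B - 1)‖ * ‖d B‖ := by simp [norm_smul, e.orthonormal.1, d]
    _ ≤ M + M * 1 :=
      add_le_add (hβM _) (mul_le_mul (hβM _) hdB (norm_nonneg _) ((norm_nonneg _).trans (hβM 0)))
    _ = 2 * M := by ring

theorem zero_mem_spectrum_weightedShift (hT : ∀ n, T (e n) = β n • e (n + 1))
    (hm : Tendsto (fun n => ‖β n‖) atBot (𝓝 0)) : 0 ∈ spectrum ℂ T := by
  refine mem_spectrum_of_forall_exists_norm_sub_smul_le fun ε hε => ?_
  obtain ⟨a, ha⟩ := (hm.eventually (gt_mem_nhds hε)).exists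
  exact ⟨e a, e.orthonormal.ne_zero a, by simp [hT, norm_smul, e.orthonormal.1, ha.le]⟩

end WeightedShift

/-- The spectrum of a hyponormal bilateral weighted shift with nonzero weights
(and of its adjoint) is exactly the closed annulus `{λ : m ≤ ‖λ‖ ≤ M}`. -/
theorem spectrum_of_hyponormal_bilateral_weighted_shift
    {H : Type*} [NormedAddCommGroup H] [InnerProductSpace ℂ H] [CompleteSpace H]
    (e : HilbertBasis ℤ ℂ H) (β : ℤ → ℂ) (T : H →L[ℂ] H)
    (hT : ∀ n : ℤ, T (e n) = β n • e (n + 1))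
    (hmono : ∀ n : ℤ, ‖β n‖ ≤ ‖β (n + 1)‖)
    (hnz : ∀ n : ℤ, β n ≠ 0)
    (M : ℝ) (hM : Filter.Tendsto (fun n : ℤ => ‖β n‖) Filter.atTop (nhds M))
    (m : ℝ) (hm : Filter.Tendsto (fun n : ℤ => ‖β n‖) Filter.atBot (nhds m)) :
    spectrum ℂ T = {lam : ℂ | m ≤ ‖lam‖ ∧ ‖lam‖ ≤ M} ∧
      spectrum ℂ (ContinuousLinearMap.adjoint T)
        = {lam : ℂ | m ≤ ‖lam‖ ∧ ‖lam‖ ≤ M} := by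
  have hβ_mono : Monotone (fun n => ‖β n‖) := monotone_int_of_le_succ hmono
  have hβM n : ‖β n‖ ≤ M := hβ_mono.ge_of_tendsto hM n
  have hmβ n : m ≤ ‖β n‖ := hβ_mono.le_of_tendsto hm n
  have hm0 : 0 ≤ m := ge_of_tendsto' hm fun _ => norm_nonneg _
  have hM0 : 0 < M := (norm_pos_iff.mpr (hnz 0)).trans_le (hβM 0)
  have : Nontrivial H := ⟨e 0, 0, e.orthonormal.ne_zero 0⟩
  have hspec : spectrum ℂ T = {lam : ℂ | m ≤ ‖lam‖ ∧ ‖lam‖ ≤ M} := by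
    ext lam
    refine ⟨fun h => ⟨not_lt.mp fun hlt => ?_, ?_⟩, fun ⟨hml, hlM⟩ => ?_⟩
    · exact notMem_spectrum_of_norm_lt (le_norm_weightedShift_apply hT hm0 hmβ)
        (le_norm_adjoint_weightedShift_apply hT hm0 hmβ) hlt h
    · exact (spectrum.norm_le_norm_of_mem h).trans <|
        T.opNorm_le_bound hM0.le (norm_weightedShift_apply_le hT hM0.le hβM)
    rcases hlM.eq_or_lt with hlM | hlM
    · exact mem_spectrum_weightedShift_of_norm_eq hT hβM hM hlM (norm_pos_iff.mp (hlM ▸ hM0))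
    rcases eq_or_ne lam 0 with rfl | hl0
    · obtain rfl : m = 0 := le_antisymm (by simpa using hml) hm0
      exact zero_mem_spectrum_weightedShift hT hm
    have := mem_spectrum_adjoint_weightedShift hT hnz hβM hM hm (μ := conj lam)
      (by rwa [RCLike.norm_conj]) (by rwa [RCLike.norm_conj]) (by simpa using hl0)
    simpa [spectrum_adjoint] using this
  refine ⟨hspec, ?_⟩
  ext lam
  simp [spectrum_adjoint, hspec]
end

section
/- Let T be a hyponormal bilateral weighted shift on H with nonzero weight sequence (β_n)_{n∈ℤ}, M = lim_{n→+∞} |β_n| and m = lim_{n→−∞} |β_n|, with m > 0. Then for every λ ∈ ℂ with |λ| < m, the operator λI − T is bounded below by m − |λ| (i.e., ‖(λI − T)x‖ ≥ (m − |λ|)‖x‖ for all x ∈ H) and has dense range; consequently λI − T is invertible, so λ belongs to the resolvent set of T. -/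
/-!
Since the weights increase to their limits, `m ≤ |β n|` for every `n`. Reading `T` and `T*` in
the basis `e`, both shift coordinates and multiply them by weights (or their conjugates), so
Parseval gives `‖T x‖ ≥ m ‖x‖` and `‖T* x‖ ≥ m ‖x‖`. Hence for `|λ| < m` both `λ - T` and its
adjoint `conj λ - T*` are bounded below by `m - |λ|`. The first bound makes the range of `λ - T`
closed, the injectivity of the adjoint makes it dense, so `λ - T` is bijective, hence invertible.
-/

open scoped ComplexConjugate

local notation "⟪" x ", " y "⟫" => @inner ℂ _ _ x y

namespace HilbertBasis

variable {𝕜 E ι : Type*} [RCLike 𝕜] [NormedAddCommGroup E] [InnerProductSpace 𝕜 E]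

theorem hasSum_norm_inner_sq (b : HilbertBasis ι 𝕜 E) (x : E) :
    HasSum (fun i => ‖inner 𝕜 (b i) x‖ ^ 2) (‖x‖ ^ 2) := by
  simpa only [b.repr_apply_apply, ENNReal.toReal_ofNat, Real.rpow_two,
    LinearIsometryEquiv.norm_map] using lp.hasSum_norm (p := 2) (by norm_num) (b.repr x)

theorem mul_norm_le_norm_of_reindex (b : HilbertBasis ι 𝕜 E) (σ : ι ≃ ι) {c : ℝ} (hc : 0 ≤ c)
    {x y : E} (h : ∀ i, c * ‖inner 𝕜 (b (σ i)) x‖ ≤ ‖inner 𝕜 (b i) y‖) :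
    c * ‖x‖ ≤ ‖y‖ := by
  have hx := (σ.hasSum_iff.2 (b.hasSum_norm_inner_sq x)).mul_left (c ^ 2)
  have hsq : (c * ‖x‖) ^ 2 ≤ ‖y‖ ^ 2 := by
    rw [mul_pow]
    refine hasSum_le (fun i => ?_) hx (b.hasSum_norm_inner_sq y)
    simpa only [Function.comp_apply, mul_pow] using pow_le_pow_left₀ (by positivity) (h i) 2
  exact (pow_le_pow_iff_left₀ (by positivity) (norm_nonneg _) two_ne_zero).1 hsq

end HilbertBasis

namespace ContinuousLinearMap

section Normed

variable {𝕜 E : Type*} [NontriviallyNormedField 𝕜] [NormedAddCommGroup E] [NormedSpace 𝕜 E]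

theorem mul_norm_le_norm_smul_one_sub_apply {T : E →L[𝕜] E} {c : ℝ}
    (hT : ∀ x, c * ‖x‖ ≤ ‖T x‖) (a : 𝕜) (x : E) :
    (c - ‖a‖) * ‖x‖ ≤ ‖(a • (1 : E →L[𝕜] E) - T) x‖ :=
  calc (c - ‖a‖) * ‖x‖ ≤ ‖T x‖ - ‖a • x‖ := by rw [norm_smul]; linarith [hT x]
    _ ≤ ‖T x - a • x‖ := norm_sub_norm_le _ _
    _ = ‖(a • (1 : E →L[𝕜] E) - T) x‖ := by simp [norm_sub_rev]

theorem injective_of_mul_norm_le_norm {A : E →L[𝕜] E} {c : ℝ} (hc : 0 < c)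
    (hA : ∀ x, c * ‖x‖ ≤ ‖A x‖) : Function.Injective A :=
  (antilipschitzWith_iff_exists_mul_le_norm.2 ⟨c, hc, hA⟩).choose_spec.injective

theorem isUnit_of_mul_norm_le_norm_of_denseRange [CompleteSpace E] {A : E →L[𝕜] E} {c : ℝ}
    (hc : 0 < c) (hA : ∀ x, c * ‖x‖ ≤ ‖A x‖) (hd : DenseRange A) : IsUnit A := by
  obtain ⟨K, hK⟩ := antilipschitzWith_iff_exists_mul_le_norm.2 ⟨c, hc, hA⟩
  refine A.isUnit_iff_bijective.2 ⟨hK.injective, ?_⟩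
  rw [← Set.range_eq_univ, ← (hK.isClosed_range A.uniformContinuous).closure_eq]
  exact hd.closure_range

end Normed

theorem denseRange_of_injective_adjoint {𝕜 E F : Type*} [RCLike 𝕜]
    [NormedAddCommGroup E] [InnerProductSpace 𝕜 E] [CompleteSpace E]
    [NormedAddCommGroup F] [InnerProductSpace 𝕜 F] [CompleteSpace F] {A : E →L[𝕜] F}
    (h : Function.Injective (adjoint A)) : DenseRange A := by
  have hA : A.rangeᗮ = ⊥ := by rw [A.orthogonal_range]; exact LinearMap.ker_eq_bot.2 h
  simpa [DenseRange, LinearMap.coe_range] using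
    Submodule.dense_iff_topologicalClosure_eq_top.2 (Submodule.topologicalClosure_eq_top_iff.2 hA)

end ContinuousLinearMap

section WeightedShift

variable {H : Type*} [NormedAddCommGroup H] [InnerProductSpace ℂ H]
  (e : HilbertBasis ℤ ℂ H) {β : ℤ → ℂ} {T : H →L[ℂ] H} (hT : ∀ n, T (e n) = β n • e (n + 1))
include hT

theorem inner_basis_apply_of_shift (k : ℤ) (x : H) :
    ⟪e k, T x⟫ = β (k - 1) * ⟪e (k - 1), x⟫ := by
  have hT' : (innerSL ℂ (e k)).comp T = β (k - 1) • innerSL ℂ (e (k - 1)) := by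
    refine ContinuousLinearMap.ext_on
      (Submodule.dense_iff_topologicalClosure_eq_top.2 e.dense_span) ?_
    rintro _ ⟨n, rfl⟩
    simp only [ContinuousLinearMap.comp_apply, innerSL_apply_apply, hT n, inner_smul_right,
      orthonormal_iff_ite.mp e.orthonormal, smul_apply, smul_eq_mul]
    by_cases hk : k = n + 1
    · simp [hk]
    · simp [hk, show k - 1 ≠ n by omega]
  simpa using congr($hT' x)

theorem inner_basis_adjoint_apply_of_shift [CompleteSpace H] (k : ℤ) (x : H) :
    ⟪e k, T.adjoint x⟫ = conj (β k) * ⟪e (k + 1), x⟫ := by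
  rw [ContinuousLinearMap.adjoint_inner_right, hT k, inner_smul_left]

variable {c : ℝ} (hc : 0 ≤ c) (hβ : ∀ n, c ≤ ‖β n‖)
include hc hβ

theorem mul_norm_le_norm_apply_of_shift (x : H) : c * ‖x‖ ≤ ‖T x‖ := by
  refine e.mul_norm_le_norm_of_reindex (Equiv.subRight 1) hc fun k => ?_
  rw [inner_basis_apply_of_shift e hT, norm_mul]
  exact mul_le_mul_of_nonneg_right (hβ _) (norm_nonneg _)

theorem mul_norm_le_norm_adjoint_apply_of_shift [CompleteSpace H] (x : H) :
    c * ‖x‖ ≤ ‖T.adjoint x‖ := by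
  refine e.mul_norm_le_norm_of_reindex (Equiv.addRight 1) hc fun k => ?_
  rw [inner_basis_adjoint_apply_of_shift e hT, norm_mul, RCLike.norm_conj]
  exact mul_le_mul_of_nonneg_right (hβ _) (norm_nonneg _)

end WeightedShift

theorem resolvent_of_hyponormal_bilateral_weighted_shift_general
    {H : Type*} [NormedAddCommGroup H] [InnerProductSpace ℂ H] [CompleteSpace H]
    (e : HilbertBasis ℤ ℂ H) (β : ℤ → ℂ) (T : H →L[ℂ] H)
    (hT : ∀ n : ℤ, T (e n) = β n • e (n + 1))
    (hmono : ∀ n : ℤ, ‖β n‖ ≤ ‖β (n + 1)‖)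
    (m : ℝ) (hm : Filter.Tendsto (fun n : ℤ => ‖β n‖) Filter.atBot (nhds m)) :
    ∀ lam : ℂ, ‖lam‖ < m →
      (∀ x : H, (m - ‖lam‖) * ‖x‖ ≤ ‖(lam • (1 : H →L[ℂ] H) - T) x‖) ∧
      DenseRange ⇑(lam • (1 : H →L[ℂ] H) - T) ∧
      lam ∉ spectrum ℂ T := by
  intro lam hlam
  have hβ : ∀ n, m ≤ ‖β n‖ := (monotone_int_of_le_succ hmono).le_of_tendsto hm
  have hm0 : 0 ≤ m := (norm_nonneg lam).trans hlam.le
  have hgap : 0 < m - ‖lam‖ := sub_pos.2 hlam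
  have hlow := ContinuousLinearMap.mul_norm_le_norm_smul_one_sub_apply
    (mul_norm_le_norm_apply_of_shift e hT hm0 hβ) lam
  have hdense : DenseRange (lam • (1 : H →L[ℂ] H) - T) := by
    refine ContinuousLinearMap.denseRange_of_injective_adjoint ?_
    have hadj := ContinuousLinearMap.mul_norm_le_norm_smul_one_sub_apply
      (mul_norm_le_norm_adjoint_apply_of_shift e hT hm0 hβ) (conj lam)
    rw [RCLike.norm_conj] at hadj
    simpa [LinearIsometryEquiv.map_smulₛₗ, ContinuousLinearMap.adjoint_one] using
      ContinuousLinearMap.injective_of_mul_norm_le_norm hgap hadj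
  refine ⟨hlow, hdense, fun hs => spectrum.mem_iff.1 hs ?_⟩
  rw [Algebra.algebraMap_eq_smul_one]
  exact ContinuousLinearMap.isUnit_of_mul_norm_le_norm_of_denseRange hgap hlow hdense

/-- For a hyponormal bilateral weighted shift with nonzero weights and `m > 0`,
every `λ` with `‖λ‖ < m` yields `λI - T` bounded below by `m - ‖λ‖`, with dense
range, hence invertible: `λ` lies in the resolvent set of `T`. -/
theorem resolvent_of_hyponormal_bilateral_weighted_shift
    {H : Type*} [NormedAddCommGroup H] [InnerProductSpace ℂ H] [CompleteSpace H]
    (e : HilbertBasis ℤ ℂ H) (β : ℤ → ℂ) (T : H →L[ℂ] H)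
    (hT : ∀ n : ℤ, T (e n) = β n • e (n + 1))
    (hmono : ∀ n : ℤ, ‖β n‖ ≤ ‖β (n + 1)‖)
    (hnz : ∀ n : ℤ, β n ≠ 0)
    (M : ℝ) (hM : Filter.Tendsto (fun n : ℤ => ‖β n‖) Filter.atTop (nhds M))
    (m : ℝ) (hm : Filter.Tendsto (fun n : ℤ => ‖β n‖) Filter.atBot (nhds m))
    (hmpos : 0 < m) :
    ∀ lam : ℂ, ‖lam‖ < m →
      (∀ x : H, (m - ‖lam‖) * ‖x‖ ≤ ‖(lam • (1 : H →L[ℂ] H) - T) x‖) ∧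
      DenseRange ⇑(lam • (1 : H →L[ℂ] H) - T) ∧
      lam ∉ spectrum ℂ T :=
  resolvent_of_hyponormal_bilateral_weighted_shift_general e β T hT hmono m hm
end
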